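/- arXiv:cond-mat/0601544 — 6 statements merged into one kernel-verified Lean document; each statement's English description precedes it below -/
import Mathlib

section
/- For θ > 0 and k ≥ 1, the integral ∫_0^∞ u^θ (g(u) − f_n(u)) du, where g is the χ²_k density and f_n is the density of n·Beta(k/2,(n−k)/2), equals Γ((2θ+k)/2)/Γ(k/2) · [2^θ − n^θ Γ(n/2)/Γ(θ + n/2)], and this quantity is O(1/n) as n → ∞. -/
/-!
Both moments are Gamma-type integrals. Substituting `u = 2t` gives
`∫ u^θ g = 2^θ Γ(θ + k/2) / Γ(k/2)`, and substituting `u = n t` turns `∫ u^θ f_n` into `n^θ` times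
a Beta integral, `n^θ Γ(n/2) Γ(θ + k/2) / (Γ(k/2) Γ(θ + n/2))`.

For the rate, log-convexity of `Γ` places the slope of `log Γ` on `[x, x + θ]` between its slopes
`log (x - 1)` on `[x - 1, x]` and `log (x + θ)` on `[x + θ, x + θ + 1]`, so
`(x - 1)^θ ≤ Γ(x + θ) / Γ(x) ≤ (x + θ)^θ`. Both bounds are `x^θ (1 + O(1/x))`; take `x = n/2`.
-/

open MeasureTheory Filter Real Set Asymptotics

lemma integral_rpow_mul_chiSqDensity {θ κ : ℝ} (h : 0 < θ + κ) :
    ∫ u in Ioi (0 : ℝ), u ^ θ * ((2 ^ κ * Gamma κ)⁻¹ * exp (-u / 2) * u ^ (κ - 1))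
      = 2 ^ θ * Gamma (θ + κ) / Gamma κ := by
  rw [setIntegral_congr_fun measurableSet_Ioi (g := fun u =>
      (2 ^ κ * Gamma κ)⁻¹ * (u ^ (θ + κ - 1) * exp (-(1 / 2 * u)))) fun u hu => ?_,
    integral_const_mul, integral_rpow_mul_exp_neg_mul_Ioi h one_half_pos, one_div_one_div,
    rpow_add two_pos]
  · field_simp
  · beta_reduce
    rw [add_sub_assoc, rpow_add (mem_Ioi.1 hu)]
    ring_nf

lemma integrableOn_rpow_mul_chiSqDensity {θ κ : ℝ} (h : 0 < θ + κ) :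
    IntegrableOn (fun u => u ^ θ * ((2 ^ κ * Gamma κ)⁻¹ * exp (-u / 2) * u ^ (κ - 1)))
      (Ioi 0) := by
  refine IntegrableOn.congr_fun ((integrableOn_rpow_mul_exp_neg_mul_rpow (s := θ + κ - 1)
    (by linarith) one_pos one_half_pos).const_mul (2 ^ κ * Gamma κ)⁻¹) (fun u hu => ?_)
    measurableSet_Ioi
  rw [rpow_one, add_sub_assoc, rpow_add (mem_Ioi.1 hu)]
  ring_nf

open ProbabilityTheory in
lemma intervalIntegral_rpow_mul_one_sub_rpow {a b : ℝ} (ha : 0 < a) (hb : 0 < b) :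
    ∫ t in (0 : ℝ)..1, t ^ (a - 1) * (1 - t) ^ (b - 1) = beta a b := by
  rw [beta_eq_betaIntegralReal a b ha hb, Complex.betaIntegral,
    intervalIntegral.integral_congr (g := fun t : ℝ => ((t ^ (a - 1) * (1 - t) ^ (b - 1) : ℝ) : ℂ)),
    intervalIntegral.integral_ofReal, Complex.ofReal_re]
  intro t ht
  rw [uIcc_of_le zero_le_one] at ht
  push_cast [Complex.ofReal_cpow ht.1, Complex.ofReal_cpow (sub_nonneg.2 ht.2)]
  rfl

open ProbabilityTheory in
lemma intervalIntegral_div_rpow_mul_one_sub_div_rpow {a b N : ℝ} (ha : 0 < a) (hb : 0 < b)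
    (hN : 0 < N) :
    ∫ u in (0 : ℝ)..N, (u / N) ^ (a - 1) * (1 - u / N) ^ (b - 1) = N * beta a b := by
  rw [intervalIntegral.integral_comp_div (fun t => t ^ (a - 1) * (1 - t) ^ (b - 1)) hN.ne',
    zero_div, div_self hN.ne', intervalIntegral_rpow_mul_one_sub_rpow ha hb, smul_eq_mul]

lemma rpow_mul_scaledBetaKernel_eq {θ p q N K u : ℝ} (hN : 0 < N) (hu : u ∈ Ioc 0 N) :
    u ^ θ * (if 0 ≤ u ∧ u ≤ N then 1 / N * K * (u / N) ^ (p - 1) * (1 - u / N) ^ (q - 1) else 0)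
      = N ^ (θ - 1) * K * ((u / N) ^ (θ + p - 1) * (1 - u / N) ^ (q - 1)) := by
  rw [if_pos ⟨hu.1.le, hu.2⟩, add_sub_assoc, rpow_add (div_pos hu.1 hN), div_rpow hu.1.le hN.le θ,
    rpow_sub_one hN.ne']
  field_simp

lemma scaledBetaKernel_eq_zero {p q N K u : ℝ} (hu : u ∈ Ioi 0 \ Ioc 0 N) :
    (if 0 ≤ u ∧ u ≤ N then 1 / N * K * (u / N) ^ (p - 1) * (1 - u / N) ^ (q - 1) else 0) = 0 :=
  if_neg fun h => hu.2 ⟨hu.1, h.2⟩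

open ProbabilityTheory in
lemma integral_rpow_mul_scaledBetaKernel {θ p q N K : ℝ} (hp : 0 < θ + p) (hq : 0 < q)
    (hN : 0 < N) :
    ∫ u in Ioi (0 : ℝ), u ^ θ *
        (if 0 ≤ u ∧ u ≤ N then 1 / N * K * (u / N) ^ (p - 1) * (1 - u / N) ^ (q - 1) else 0)
      = N ^ θ * K * beta (θ + p) q := by
  rw [setIntegral_eq_of_subset_of_forall_sdiff_eq_zero measurableSet_Ioi Ioc_subset_Ioi_self
      fun u hu => by rw [scaledBetaKernel_eq_zero hu, mul_zero],
    setIntegral_congr_fun measurableSet_Ioc fun u hu => rpow_mul_scaledBetaKernel_eq hN hu,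
    integral_const_mul, ← intervalIntegral.integral_of_le hN.le,
    intervalIntegral_div_rpow_mul_one_sub_div_rpow hp hq hN, rpow_sub_one hN.ne']
  field_simp

open ProbabilityTheory in
lemma integrableOn_rpow_mul_scaledBetaKernel {θ p q N K : ℝ} (hp : 0 < θ + p) (hq : 0 < q)
    (hN : 0 < N) :
    IntegrableOn (fun u => u ^ θ *
        (if 0 ≤ u ∧ u ≤ N then 1 / N * K * (u / N) ^ (p - 1) * (1 - u / N) ^ (q - 1) else 0))
      (Ioi 0) := by
  have hkernel : IntervalIntegrable (fun u => (u / N) ^ (θ + p - 1) * (1 - u / N) ^ (q - 1))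
      volume 0 N := by
    refine intervalIntegral.intervalIntegrable_of_integral_ne_zero ?_
    rw [intervalIntegral_div_rpow_mul_one_sub_div_rpow hp hq hN]
    exact mul_ne_zero hN.ne' (beta_pos hp hq).ne'
  rw [intervalIntegrable_iff_integrableOn_Ioc_of_le hN.le] at hkernel
  refine IntegrableOn.of_forall_sdiff_eq_zero ?_ measurableSet_Ioi
    fun u hu => by rw [scaledBetaKernel_eq_zero hu, mul_zero]
  exact IntegrableOn.congr_fun (hkernel.const_mul (N ^ (θ - 1) * K))
    (fun u hu => (rpow_mul_scaledBetaKernel_eq hN hu).symm) measurableSet_Ioc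

namespace Real

lemma Gamma_add_div_Gamma_le_rpow {x θ : ℝ} (hx : 0 < x) (hθ : 0 < θ) :
    Gamma (x + θ) / Gamma x ≤ (x + θ) ^ θ := by
  have hxθ : 0 < x + θ := by linarith
  have hΓx := Gamma_pos_of_pos hx
  have hΓxθ := Gamma_pos_of_pos hxθ
  have hslope := convexOn_log_Gamma.slope_mono_adjacent (mem_Ioi.2 hx)
    (mem_Ioi.2 (by linarith : 0 < x + θ + 1)) (by linarith : x < x + θ) (by linarith)
  rw [Function.comp_apply, Function.comp_apply, Function.comp_apply, Gamma_add_one hxθ.ne',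
    log_mul hxθ.ne' hΓxθ.ne', add_sub_cancel_left, add_sub_cancel_left, div_one,
    add_sub_cancel_right, div_le_iff₀ hθ] at hslope
  rw [← log_le_log_iff (div_pos hΓxθ hΓx) (by positivity), log_div hΓxθ.ne' hΓx.ne',
    log_rpow hxθ]
  linarith

lemma rpow_le_Gamma_add_div_Gamma {x θ : ℝ} (hx : 1 < x) (hθ : 0 < θ) :
    (x - 1) ^ θ ≤ Gamma (x + θ) / Gamma x := by
  have hx₁ : 0 < x - 1 := by linarith
  have hΓx₁ := Gamma_pos_of_pos hx₁
  have hΓxθ := Gamma_pos_of_pos (by linarith : 0 < x + θ)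
  have hΓx : Gamma x = (x - 1) * Gamma (x - 1) := by
    simpa using Gamma_add_one hx₁.ne'
  have hslope := convexOn_log_Gamma.slope_mono_adjacent (mem_Ioi.2 hx₁)
    (mem_Ioi.2 (by linarith : 0 < x + θ)) (by linarith : x - 1 < x) (by linarith)
  rw [Function.comp_apply, Function.comp_apply, Function.comp_apply, hΓx,
    log_mul hx₁.ne' hΓx₁.ne', add_sub_cancel_right, sub_sub_cancel, div_one,
    add_sub_cancel_left, le_div_iff₀ hθ] at hslope
  rw [hΓx, ← log_le_log_iff (by positivity) (by positivity),
    log_div hΓxθ.ne' (by positivity), log_rpow hx₁, log_mul hx₁.ne' hΓx₁.ne']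
  linarith

end Real

lemma div_add_rpow_sub_one_isBigO (a b : ℝ) :
    (fun x : ℝ => (x / (x + a)) ^ b - 1) =O[atTop] fun x => x⁻¹ := by
  have hdiff : DifferentiableAt ℝ (fun t : ℝ => (1 / (1 + a * t)) ^ b) 0 := by
    fun_prop (disch := norm_num)
  have := hdiff.hasDerivAt.isBigO_sub.comp_tendsto tendsto_inv_atTop_zero
  refine this.congr' ?_ (.of_eq (by simp [Function.comp_def]))
  filter_upwards [eventually_gt_atTop 0] with x hx
  simp only [Function.comp_apply, mul_zero, add_zero, div_one, one_rpow]
  rw [one_div, show x / (x + a) = (1 + a * x⁻¹)⁻¹ by field_simp]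

lemma rpow_mul_Gamma_div_Gamma_add_sub_one_isBigO {θ : ℝ} (hθ : 0 < θ) :
    (fun x : ℝ => x ^ θ * Gamma x / Gamma (x + θ) - 1) =O[atTop] fun x => x⁻¹ := by
  have hsandwich : ∀ᶠ x : ℝ in atTop, (x / (x + θ)) ^ θ ≤ x ^ θ * Gamma x / Gamma (x + θ) ∧
      x ^ θ * Gamma x / Gamma (x + θ) ≤ (x / (x + -1)) ^ θ := by
    filter_upwards [eventually_gt_atTop 1] with x hx
    have hx₀ : 0 < x := by linarith
    rw [← div_div_eq_mul_div, div_rpow hx₀.le (by linarith),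
      div_rpow hx₀.le (by linarith), ← sub_eq_add_neg]
    exact ⟨div_le_div_of_nonneg_left (by positivity) (by positivity)
        (Gamma_add_div_Gamma_le_rpow hx₀ hθ),
      div_le_div_of_nonneg_left (by positivity) (by bound) (rpow_le_Gamma_add_div_Gamma hx hθ)⟩
  refine (IsBigO.of_bound' ?_).trans
    ((div_add_rpow_sub_one_isBigO θ θ).norm_left.add (div_add_rpow_sub_one_isBigO (-1) θ).norm_left)
  filter_upwards [hsandwich] with x ⟨hlow, hup⟩
  simp only [norm_eq_abs]
  refine le_trans (abs_le.2 ⟨?_, ?_⟩) (le_abs_self _) <;>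
    linarith [neg_abs_le ((x / (x + θ)) ^ θ - 1), le_abs_self ((x / (x + -1)) ^ θ - 1),
      abs_nonneg ((x / (x + θ)) ^ θ - 1), abs_nonneg ((x / (x + -1)) ^ θ - 1)]

lemma natCast_rpow_mul_Gamma_half_div_sub_isBigO {θ : ℝ} (hθ : 0 < θ) :
    (fun n : ℕ => (n : ℝ) ^ θ * Gamma ((n : ℝ) / 2) / Gamma (θ + (n : ℝ) / 2) - 2 ^ θ)
      =O[atTop] fun n : ℕ => (n : ℝ)⁻¹ := by
  have hhalf : Tendsto (fun n : ℕ => (n : ℝ) / 2) atTop atTop :=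
    tendsto_natCast_atTop_atTop.atTop_div_const two_pos
  have hx := ((rpow_mul_Gamma_div_Gamma_add_sub_one_isBigO hθ).comp_tendsto hhalf).const_mul_left
    (2 ^ θ)
  refine (hx.congr_left fun n => ?_).trans (IsBigO.of_bound 2 (.of_forall fun n => ?_))
  · rw [Function.comp_apply, add_comm, mul_sub, mul_one, ← mul_div_assoc, ← mul_assoc,
      ← mul_rpow zero_le_two (by positivity), mul_div_cancel₀ _ two_ne_zero]
  · simp [div_eq_mul_inv]

theorem stmt_5_general (k : ℕ) (θ : ℝ) (hθ : 0 < θ)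
    (g : ℝ → ℝ)
    (hg : ∀ u : ℝ, 0 < u → g u =
      (2 ^ ((k : ℝ) / 2) * Real.Gamma ((k : ℝ) / 2))⁻¹ * Real.exp (-u / 2) *
        u ^ ((k : ℝ) / 2 - 1))
    (f : ℕ → ℝ → ℝ)
    (hf : ∀ (n : ℕ) (u : ℝ), f n u =
      if 0 ≤ u ∧ u ≤ (n : ℝ) then
        (1 / (n : ℝ)) * (Real.Gamma ((n : ℝ) / 2) /
          (Real.Gamma ((k : ℝ) / 2) * Real.Gamma (((n : ℝ) - (k : ℝ)) / 2))) *
          (u / n) ^ ((k : ℝ) / 2 - 1) * (1 - u / n) ^ (((n : ℝ) - (k : ℝ)) / 2 - 1)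
      else 0) :
    (∀ n : ℕ, k < n →
      ∫ u in Set.Ioi (0 : ℝ), u ^ θ * (g u - f n u)
        = Real.Gamma ((2 * θ + (k : ℝ)) / 2) / Real.Gamma ((k : ℝ) / 2) *
          ((2 : ℝ) ^ θ - (n : ℝ) ^ θ * Real.Gamma ((n : ℝ) / 2) /
            Real.Gamma (θ + (n : ℝ) / 2))) ∧
    (∃ C : ℝ, ∀ᶠ n : ℕ in Filter.atTop,
      |(n : ℝ) ^ θ * Real.Gamma ((n : ℝ) / 2) / Real.Gamma (θ + (n : ℝ) / 2) - 2 ^ θ|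
        ≤ C / (n : ℝ)) := by
  refine ⟨fun n hkn => ?_, ?_⟩
  · have hkn' : (k : ℝ) < n := by exact_mod_cast hkn
    have hp : 0 < θ + (k : ℝ) / 2 := by positivity
    have hq : 0 < ((n : ℝ) - k) / 2 := by linarith
    have hN : 0 < (n : ℝ) := by linarith [(k.cast_nonneg : (0 : ℝ) ≤ k)]
    simp only [hf]
    rw [setIntegral_congr_fun measurableSet_Ioi fun u hu => by rw [hg u hu, mul_sub],
      integral_sub (integrableOn_rpow_mul_chiSqDensity hp)
        (integrableOn_rpow_mul_scaledBetaKernel hp hq hN),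
      integral_rpow_mul_chiSqDensity hp, integral_rpow_mul_scaledBetaKernel hp hq hN,
      ProbabilityTheory.beta, show θ + (k : ℝ) / 2 + ((n : ℝ) - k) / 2 = θ + (n : ℝ) / 2 by ring,
      show (2 * θ + (k : ℝ)) / 2 = θ + (k : ℝ) / 2 by ring]
    field_simp [(Gamma_pos_of_pos hq).ne']
  · obtain ⟨C, hC⟩ := (natCast_rpow_mul_Gamma_half_div_sub_isBigO hθ).bound
    exact ⟨C, hC.mono fun n hn => by simpa [div_eq_mul_inv] using hn⟩

/-- For `θ > 0` and `k ≥ 1`, with `g` the `χ²_k` density and `f_n` the density of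
`n·Beta(k/2,(n-k)/2)`, the integral `∫_0^∞ u^θ (g(u) − f_n(u)) du` equals
`Γ((2θ+k)/2)/Γ(k/2) · [2^θ − n^θ Γ(n/2)/Γ(θ+n/2)]`, and this quantity is `O(1/n)`. -/
theorem stmt_5 (k : ℕ) (hk : 1 ≤ k) (θ : ℝ) (hθ : 0 < θ)
    (g : ℝ → ℝ)
    (hg : ∀ u : ℝ, 0 < u → g u =
      (2 ^ ((k : ℝ) / 2) * Real.Gamma ((k : ℝ) / 2))⁻¹ * Real.exp (-u / 2) *
        u ^ ((k : ℝ) / 2 - 1))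
    (f : ℕ → ℝ → ℝ)
    (hf : ∀ (n : ℕ) (u : ℝ), f n u =
      if 0 ≤ u ∧ u ≤ (n : ℝ) then
        (1 / (n : ℝ)) * (Real.Gamma ((n : ℝ) / 2) /
          (Real.Gamma ((k : ℝ) / 2) * Real.Gamma (((n : ℝ) - (k : ℝ)) / 2))) *
          (u / n) ^ ((k : ℝ) / 2 - 1) * (1 - u / n) ^ (((n : ℝ) - (k : ℝ)) / 2 - 1)
      else 0) :
    (∀ n : ℕ, k < n →
      ∫ u in Set.Ioi (0 : ℝ), u ^ θ * (g u - f n u)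
        = Real.Gamma ((2 * θ + (k : ℝ)) / 2) / Real.Gamma ((k : ℝ) / 2) *
          ((2 : ℝ) ^ θ - (n : ℝ) ^ θ * Real.Gamma ((n : ℝ) / 2) /
            Real.Gamma (θ + (n : ℝ) / 2))) ∧
    (∃ C : ℝ, ∀ᶠ n : ℕ in Filter.atTop,
      |(n : ℝ) ^ θ * Real.Gamma ((n : ℝ) / 2) / Real.Gamma (θ + (n : ℝ) / 2) - 2 ^ θ|
        ≤ C / (n : ℝ)) :=
  stmt_5_general k θ hθ g hg f hf
end

section
/- For 1 ≤ k ≤ n−4, the densities f (of n·Beta(k/2,(n−k)/2)) and g (of χ²_k) satisfy the pointwise bound (f(u)/g(u) − 1)^+ ≤ (k+3)/(n−k−3) for all u > 0 where g(u) > 0. -/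
/-!
After cancelling `Γ(k/2)` and the powers of `u`, the ratio `f/g` on `(0, n)` is
`(2/n)^(k/2) · Γ(n/2)/Γ((n-k)/2) · e^{u/2} (1 - u/n)^{(n-k)/2-1}`. The `u`-dependent factor
is maximal at `u = k + 2` (tangent line bound for `log`). The Gamma ratio is bounded by
telescoping `log Γ(x+1) - log Γ x = log x ≤ G(x+1) - G x` with `G t = t log t - t`, plus one
log-convexity half step when `k` is odd. The resulting logarithms collapse exactly to
`log (n / (n-k-3))`, i.e. `f/g ≤ 1 + (k+3)/(n-k-3)`.
-/

open Real

/-- The leading term of Stirling's formula for `log Γ t`; its derivative is `log t`. -/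
noncomputable def stirling (t : ℝ) : ℝ := t * log t - t

lemma mul_log_le_stirling_sub {x y : ℝ} (hx : 0 < x) (hy : 0 < y) :
    (y - x) * log x ≤ stirling y - stirling x := by
  have h := mul_le_mul_of_nonneg_left (log_le_sub_one_of_pos (div_pos hx hy)) hy.le
  rw [log_div hx.ne' hy.ne', mul_sub_one, mul_div_cancel₀ x hy.ne'] at h
  unfold stirling
  linear_combination h

lemma log_Gamma_add_nat_sub_le {c : ℝ} (hc : 0 < c) (j : ℕ) :
    log (Gamma (c + j)) - log (Gamma c) ≤ stirling (c + j) - stirling c := by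
  induction j with
  | zero => simp
  | succ j ih =>
    have hcj : 0 < c + j := by positivity
    have step := mul_log_le_stirling_sub hcj (by linarith : 0 < c + j + 1)
    rw [add_sub_cancel_left, one_mul] at step
    rw [Nat.cast_succ, ← add_assoc, Gamma_add_one hcj.ne',
      log_mul hcj.ne' (Gamma_pos_of_pos hcj).ne']
    linarith

lemma log_Gamma_add_half_sub_le {b : ℝ} (hb : 0 < b) :
    log (Gamma (b + 1 / 2)) - log (Gamma b) ≤ log b / 2 := by
  have h := convexOn_log_Gamma.2 (Set.mem_Ioi.2 hb) (Set.mem_Ioi.2 (by linarith : 0 < b + 1))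
    (by norm_num : (0:ℝ) ≤ 1 / 2) (by norm_num : (0:ℝ) ≤ 1 / 2) (by norm_num)
  simp only [Function.comp, smul_eq_mul] at h
  rw [show 1 / 2 * b + 1 / 2 * (b + 1) = b + 1 / 2 by ring, Gamma_add_one hb.ne',
    log_mul hb.ne' (Gamma_pos_of_pos hb).ne'] at h
  linarith

lemma log_Gamma_add_half_nat_sub_le (k : ℕ) {b : ℝ} (hb : 2 ≤ b) :
    log (Gamma (k / 2 + b)) - log (Gamma b) ≤
      stirling (k / 2 + b) - stirling (b - 1) - log (b - 3 / 2) := by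
  have hb1 : 0 < b - 1 := by linarith
  have hb32 : 0 < b - 3 / 2 := by linarith
  rcases Nat.even_or_odd' k with ⟨j, rfl | rfl⟩
  · have tele := log_Gamma_add_nat_sub_le (by linarith : 0 < b) j
    have step := mul_log_le_stirling_sub hb1 (by linarith : 0 < b)
    have mono := log_le_log hb32 (by linarith : b - 3 / 2 ≤ b - 1)
    rw [show ((2 * j : ℕ) : ℝ) / 2 + b = b + j by push_cast; ring]
    linarith
  · have tele := log_Gamma_add_nat_sub_le (by linarith : 0 < b + 1 / 2) j
    have half := log_Gamma_add_half_sub_le (by linarith : 0 < b)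
    have step := mul_log_le_stirling_sub hb1 (by linarith : 0 < b + 1 / 2)
    -- `(b-1)^3 - b (b-3/2)^2 = 3b/4 - 1`
    have cube : log b + 2 * log (b - 3 / 2) ≤ 3 * log (b - 1) := by
      have h := log_le_log (by positivity) (by nlinarith : b * (b - 3 / 2) ^ 2 ≤ (b - 1) ^ 3)
      rwa [log_mul (by positivity) (by positivity), log_pow, log_pow] at h
    rw [show ((2 * j + 1 : ℕ) : ℝ) / 2 + b = b + 1 / 2 + j by push_cast; ring]
    linarith

lemma add_mul_log_one_sub_div_le {m n u : ℝ} (hm : 0 < m) (hn : 0 < n) (hun : u < n) :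
    u / 2 + m * log (1 - u / n) ≤ n / 2 - m + m * log (2 * m / n) := by
  have hnu : 0 < n - u := by linarith
  have h := mul_le_mul_of_nonneg_left
    (log_le_sub_one_of_pos (div_pos hnu (by positivity : 0 < 2 * m))) hm.le
  have e : m * ((n - u) / (2 * m) - 1) = (n - u) / 2 - m := by field_simp
  rw [log_div hnu.ne' (by positivity), e] at h
  rw [one_sub_div hn.ne', log_div hnu.ne' hn.ne', log_div (by positivity) hn.ne']
  linear_combination h

lemma beta_density_div_chiSq_density {k n u : ℝ} (hk : 0 < k) (hn : 0 < n) (hu : 0 < u) :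
    1 / n * (Gamma (n / 2) / (Gamma (k / 2) * Gamma ((n - k) / 2))) * (u / n) ^ (k / 2 - 1) *
        (1 - u / n) ^ ((n - k) / 2 - 1) /
      ((2 ^ (k / 2) * Gamma (k / 2))⁻¹ * exp (-u / 2) * u ^ (k / 2 - 1)) =
    (2 / n) ^ (k / 2) * (Gamma (n / 2) / Gamma ((n - k) / 2)) *
      (exp (u / 2) * (1 - u / n) ^ ((n - k) / 2 - 1)) := by
  rw [div_rpow hu.le hn.le, div_rpow zero_le_two hn.le, rpow_sub_one hn.ne', neg_div, exp_neg]
  field_simp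

lemma density_ratio_le {k : ℕ} {n u : ℝ} (hkn : k + 4 ≤ n) (hun : u < n) :
    (2 / n) ^ ((k : ℝ) / 2) * (Gamma (n / 2) / Gamma ((n - k) / 2)) *
      (exp (u / 2) * (1 - u / n) ^ ((n - k) / 2 - 1)) ≤ n / (n - k - 3) := by
  have hk : (0 : ℝ) ≤ k := k.cast_nonneg
  have hn : 0 < n := by linarith
  have hnu : 0 < 1 - u / n := by rw [sub_pos, div_lt_one hn]; exact hun
  have hΓ : 0 < Gamma ((n - k) / 2) := Gamma_pos_of_pos (by linarith)
  have gamma := log_Gamma_add_half_nat_sub_le k (b := (n - k) / 2) (by linarith)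
  have peak := add_mul_log_one_sub_div_le (m := (n - k) / 2 - 1) (by linarith) hn hun
  rw [show (k : ℝ) / 2 + (n - k) / 2 = n / 2 by ring] at gamma
  rw [← log_le_log_iff (by positivity) (div_pos hn (by linarith)),
    log_mul (by positivity) (by positivity), log_mul (by positivity) (by positivity),
    log_mul (by positivity) (by positivity),
    log_rpow (by positivity), log_rpow hnu, log_div (by positivity) hΓ.ne', log_exp]
  unfold stirling at gamma
  have e1 : log (2 / n) = log 2 - log n := log_div two_ne_zero hn.ne'
  have e2 : log (n / 2) = log n - log 2 := log_div hn.ne' two_ne_zero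
  have e3 : log ((n - k) / 2 - 1) = log (n - k - 2) - log 2 := by
    rw [show (n - k) / 2 - 1 = (n - k - 2) / 2 by ring, log_div (by linarith) two_ne_zero]
  have e4 : log ((n - k) / 2 - 3 / 2) = log (n - k - 3) - log 2 := by
    rw [show (n - k) / 2 - 3 / 2 = (n - k - 3) / 2 by ring, log_div (by linarith) two_ne_zero]
  have e5 : log (2 * ((n - k) / 2 - 1) / n) = log (n - k - 2) - log n := by
    rw [show 2 * ((n - k) / 2 - 1) = n - k - 2 by ring, log_div (by linarith) hn.ne']
  have e6 : log (n / (n - k - 3)) = log n - log (n - k - 3) := log_div hn.ne' (by linarith)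
  rw [e2, e3, e4] at gamma
  rw [e5] at peak
  rw [e1, e6]
  linear_combination gamma + peak

/-- For `1 ≤ k ≤ n − 4`, the densities `f` (of `n·Beta(k/2,(n-k)/2)`) and `g` (of `χ²_k`)
satisfy the pointwise bound `(f(u)/g(u) − 1)⁺ ≤ (k+3)/(n−k−3)` for all `u > 0`. -/
theorem stmt_6 (k n : ℕ) (hk : 1 ≤ k) (hkn : k + 4 ≤ n)
    (g : ℝ → ℝ)
    (hg : ∀ u : ℝ, 0 < u → g u =
      (2 ^ ((k : ℝ) / 2) * Real.Gamma ((k : ℝ) / 2))⁻¹ * Real.exp (-u / 2) *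
        u ^ ((k : ℝ) / 2 - 1))
    (f : ℝ → ℝ)
    (hf : ∀ u : ℝ, f u =
      if 0 ≤ u ∧ u ≤ (n : ℝ) then
        (1 / (n : ℝ)) * (Real.Gamma ((n : ℝ) / 2) /
          (Real.Gamma ((k : ℝ) / 2) * Real.Gamma (((n : ℝ) - (k : ℝ)) / 2))) *
          (u / n) ^ ((k : ℝ) / 2 - 1) * (1 - u / n) ^ (((n : ℝ) - (k : ℝ)) / 2 - 1)
      else 0) :
    ∀ u : ℝ, 0 < u → 0 < g u →
      max (f u / g u - 1) 0 ≤ ((k : ℝ) + 3) / ((n : ℝ) - (k : ℝ) - 3) := by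
  intro u hu _
  have hk' : (1 : ℝ) ≤ k := by exact_mod_cast hk
  have hkn' : (k : ℝ) + 4 ≤ n := by exact_mod_cast hkn
  have hden : 0 < (n : ℝ) - k - 3 := by linarith
  suffices h : f u / g u ≤ n / (n - k - 3) by
    rw [show (n : ℝ) / (n - k - 3) = 1 + (k + 3) / (n - k - 3) by field_simp; ring] at h
    exact max_le (by linarith) (by positivity)
  rcases lt_or_ge u n with hun | hnu
  · rw [hf, if_pos ⟨hu.le, hun.le⟩, hg u hu,
      beta_density_div_chiSq_density (by linarith) (by linarith) hu]
    exact density_ratio_le hkn' hun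
  · have hf0 : f u = 0 := by
      rw [hf]
      split_ifs with h
      · rw [le_antisymm h.2 hnu, div_self (by linarith), sub_self,
          zero_rpow (by linarith), mul_zero]
      · rfl
    rw [hf0, zero_div]
    positivity
end

section
/- For d ≥ 1, ν ≥ 0, α > 0 with ν + 4dα > 0 and (ν, d) not both giving a divergent integrand, the function C(t) = (E²/(4π²d)) ∫_{[0,1]^d} (∂_{k¹} ω(k))² e^{−tγψ(k)} dk, with ω(k) = (ν + 4α Σ_j sin²(πk^j))^{1/2} and ψ(k) = 8 Σ_j sin²(πk^j) (d≥2), satisfies: if ν > 0 there exist constants 0 < c₁ ≤ c₂ with c₁ t^{−d/2−1} ≤ C(t) ≤ c₂ t^{−d/2−1} for all t ≥ 1. -/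
/-!
Since `ν > 0`, the weight `4π²α² / (ν + 4α ∑ sin² (π kʲ))` lies between two positive constants,
so `C(t)` is comparable to `∫ sin² (2πk¹) e^{-8tγ ∑ sin² (π kʲ)} dk`, which factorizes into
`A(t) B(t)^{d-1}` with `A(t) = ∫₀¹ sin² (2πx) e^{-8tγ sin² (πx)} dx` and
`B(t) = ∫₀¹ e^{-8tγ sin² (πx)} dx`.
Both one-dimensional integrals concentrate where `sin (πx)` vanishes, and there
`sin (2πx)^{2m} e^{-tb sin² (πx)}` behaves like `x^{2m} e^{-ctx²}`, whose integral is of order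
`t^{-(2m+1)/2}`: Gaussian moments give the upper bound, and the window `x ≤ 1/(4√t)` the lower one.
Hence `A(t) ≍ t^{-3/2}` and `B(t) ≍ t^{-1/2}`.
-/

open MeasureTheory Real Set Filter Asymptotics

namespace Asymptotics

variable {α : Type*} {s : Set α} {f g : α → ℝ}

theorem isTheta_principal_of_bounds {c₁ c₂ : ℝ} (hc₁ : 0 < c₁) (hg : ∀ t ∈ s, 0 ≤ g t)
    (h : ∀ t ∈ s, c₁ * g t ≤ f t ∧ f t ≤ c₂ * g t) : f =Θ[𝓟 s] g := by
  refine ⟨isBigO_principal.2 ⟨c₂, fun t ht => ?_⟩, isBigO_principal.2 ⟨c₁⁻¹, fun t ht => ?_⟩⟩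
  · have hf : 0 ≤ f t := (mul_nonneg hc₁.le (hg t ht)).trans (h t ht).1
    rw [norm_of_nonneg hf, norm_of_nonneg (hg t ht)]
    exact (h t ht).2
  · have hf : 0 ≤ f t := (mul_nonneg hc₁.le (hg t ht)).trans (h t ht).1
    rw [norm_of_nonneg hf, norm_of_nonneg (hg t ht), inv_mul_eq_div, le_div_iff₀' hc₁]
    exact (h t ht).1

theorem IsTheta.exists_bounds_of_nonneg (h : f =Θ[𝓟 s] g) (hf : ∀ t ∈ s, 0 ≤ f t)
    (hg : ∀ t ∈ s, 0 ≤ g t) :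
    ∃ c₁ c₂ : ℝ, 0 < c₁ ∧ ∀ t ∈ s, c₁ * g t ≤ f t ∧ f t ≤ c₂ * g t := by
  obtain ⟨c₂, hc₂⟩ := isBigO_principal.1 h.1
  obtain ⟨c, hc, hgf⟩ := h.2.exists_pos
  refine ⟨c⁻¹, c₂, inv_pos.2 hc, fun t ht => ⟨?_, ?_⟩⟩
  · have := isBigOWith_principal.1 hgf t ht
    rw [norm_of_nonneg (hf t ht), norm_of_nonneg (hg t ht)] at this
    rwa [inv_mul_eq_div, div_le_iff₀' hc]
  · simpa [norm_of_nonneg (hf t ht), norm_of_nonneg (hg t ht)] using hc₂ t ht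

end Asymptotics

lemma two_mul_le_sin_pi_mul {x : ℝ} (hx₀ : 0 ≤ x) (hx : x ≤ 1 / 2) : 2 * x ≤ sin (π * x) := by
  have := mul_le_sin (x := π * x) (by positivity) (by nlinarith [pi_pos])
  rwa [← mul_assoc, div_mul_cancel₀ _ pi_ne_zero] at this

lemma integral_eq_two_mul_integral_half_of_symm {f : ℝ → ℝ} (hf : Continuous f) {a : ℝ}
    (hsymm : ∀ x, f (a - x) = f x) : ∫ x in 0..a, f x = 2 * ∫ x in 0..a / 2, f x := by
  have hsecond : ∫ x in a / 2..a, f x = ∫ x in 0..a / 2, f x := by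
    simpa [hsymm, show a - a / 2 = a / 2 by ring] using
      intervalIntegral.integral_comp_sub_left (a := a / 2) (b := a) f a
  rw [← intervalIntegral.integral_add_adjacent_intervals (b := a / 2)
    (hf.intervalIntegrable _ _) (hf.intervalIntegrable _ _), hsecond]
  ring

lemma setIntegral_univ_pi_prod {ι : Type*} [Fintype ι] {E : ι → Type*} [∀ i, MeasureSpace (E i)]
    [∀ i, SigmaFinite (volume : Measure (E i))] (s : ∀ i, Set (E i)) (f : ∀ i, E i → ℝ) :
    ∫ k in univ.pi s, ∏ i, f i (k i) = ∏ i, ∫ x in s i, f i x := by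
  rw [volume_pi, Measure.restrict_pi_pi, integral_fintype_prod_eq_prod]

/-- The one-dimensional factor of the integrand: `m = 1` for the coordinate `k¹`, `m = 0` for the
others. -/
noncomputable def sinPowHeat (m : ℕ) (b t x : ℝ) : ℝ :=
  (sin (2 * π * x) ^ 2) ^ m * exp (-(t * b) * sin (π * x) ^ 2)

lemma continuous_sinPowHeat (m : ℕ) (b t : ℝ) : Continuous (sinPowHeat m b t) := by
  unfold sinPowHeat; fun_prop

lemma sinPowHeat_nonneg (m : ℕ) (b t x : ℝ) : 0 ≤ sinPowHeat m b t x := by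
  unfold sinPowHeat; positivity

lemma sinPowHeat_one_sub (m : ℕ) (b t x : ℝ) : sinPowHeat m b t (1 - x) = sinPowHeat m b t x := by
  have h1 : sin (π * (1 - x)) = sin (π * x) := by rw [mul_one_sub, sin_pi_sub]
  have h2 : sin (2 * π * (1 - x)) ^ 2 = sin (2 * π * x) ^ 2 := by
    rw [show 2 * π * (1 - x) = -(2 * π * x) + 2 * π by ring, sin_add_two_pi, sin_neg, neg_sq]
  simp only [sinPowHeat, h1, h2]

lemma sinPowHeat_le {m : ℕ} {b t x : ℝ} (hb : 0 < b) (ht : 0 < t) (hx₀ : 0 ≤ x) (hx : x ≤ 1 / 2) :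
    sinPowHeat m b t x ≤ (4 * π ^ 2) ^ m * (x ^ (2 * m : ℝ) * exp (-(4 * b * t) * x ^ 2)) := by
  have hsin : (sin (2 * π * x) ^ 2) ^ m ≤ (4 * π ^ 2) ^ m * x ^ (2 * m : ℝ) := by
    rw [show (2 * m : ℝ) = ((2 * m : ℕ) : ℝ) by push_cast; ring, rpow_natCast, pow_mul,
      ← mul_pow]
    gcongr
    nlinarith [sin_sq_le_sq (x := 2 * π * x)]
  have hexp : exp (-(t * b) * sin (π * x) ^ 2) ≤ exp (-(4 * b * t) * x ^ 2) := by
    have h2x : (2 * x) ^ 2 ≤ sin (π * x) ^ 2 := by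
      gcongr
      exact two_mul_le_sin_pi_mul hx₀ hx
    rw [exp_le_exp]
    nlinarith [mul_le_mul_of_nonneg_left h2x (mul_pos ht hb).le]
  calc sinPowHeat m b t x ≤ ((4 * π ^ 2) ^ m * x ^ (2 * m : ℝ)) * exp (-(4 * b * t) * x ^ 2) :=
        mul_le_mul hsin hexp (exp_pos _).le (by positivity)
    _ = _ := by ring

lemma integral_sinPowHeat_le (m : ℕ) {b : ℝ} (hb : 0 < b) :
    ∃ c, ∀ t, 0 < t → ∫ x in 0..1, sinPowHeat m b t x ≤ c * t ^ (-(2 * m + 1) / 2 : ℝ) := by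
  set q : ℝ := 2 * m
  have hq : -1 < q := by linarith [show (0:ℝ) ≤ q by positivity]
  refine ⟨2 * (4 * π ^ 2) ^ m * ((4 * b) ^ (-(q + 1) / 2) * (1 / 2) * Gamma ((q + 1) / 2)),
    fun t ht => ?_⟩
  have hbt : 0 < 4 * b * t := by positivity
  have hint := integrableOn_rpow_mul_exp_neg_mul_sq hbt hq
  have hgauss : ∫ x in Ioi 0, x ^ q * exp (-(4 * b * t) * x ^ 2)
      = (4 * b * t) ^ (-(q + 1) / 2) * (1 / 2) * Gamma ((q + 1) / 2) := by
    simpa only [rpow_two] using integral_rpow_mul_exp_neg_mul_rpow two_pos hq hbt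
  calc ∫ x in 0..1, sinPowHeat m b t x = 2 * ∫ x in 0..1 / 2, sinPowHeat m b t x :=
        integral_eq_two_mul_integral_half_of_symm (continuous_sinPowHeat m b t)
          (sinPowHeat_one_sub m b t)
    _ ≤ 2 * ∫ x in 0..1 / 2, (4 * π ^ 2) ^ m * (x ^ q * exp (-(4 * b * t) * x ^ 2)) := by
        gcongr
        refine intervalIntegral.integral_mono_on (by norm_num)
          ((continuous_sinPowHeat m b t).intervalIntegrable _ _) ?_
          fun x hx => sinPowHeat_le hb ht hx.1 hx.2
        exact ((intervalIntegrable_iff_integrableOn_Ioc_of_le (by norm_num)).2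
          (hint.mono_set Ioc_subset_Ioi_self)).const_mul _
    _ = 2 * (4 * π ^ 2) ^ m * ∫ x in Ioc 0 (1 / 2), x ^ q * exp (-(4 * b * t) * x ^ 2) := by
        rw [intervalIntegral.integral_const_mul, intervalIntegral.integral_of_le (by norm_num)]
        ring
    _ ≤ 2 * (4 * π ^ 2) ^ m * ∫ x in Ioi 0, x ^ q * exp (-(4 * b * t) * x ^ 2) := by
        refine mul_le_mul_of_nonneg_left (setIntegral_mono_set hint ?_
          Ioc_subset_Ioi_self.eventuallyLE) (by positivity)
        exact (ae_restrict_mem measurableSet_Ioi).mono fun x hx =>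
          mul_nonneg (rpow_nonneg (le_of_lt hx) q) (exp_pos _).le
    _ = _ := by
        rw [hgauss, mul_rpow (by positivity) ht.le]
        ring

lemma le_sinPowHeat {m : ℕ} {b t x : ℝ} (hb : 0 < b) (ht : 1 ≤ t) (hx₀ : 0 ≤ x)
    (htx : t * x ^ 2 ≤ 1 / 16) :
    16 ^ m * exp (-(b * π ^ 2 / 16)) * x ^ (2 * m) ≤ sinPowHeat m b t x := by
  have hx : x ≤ 1 / 4 := by nlinarith
  have hsin : 16 ^ m * x ^ (2 * m) ≤ (sin (2 * π * x) ^ 2) ^ m := by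
    have h4x : 2 * (2 * x) ≤ sin (π * (2 * x)) :=
      two_mul_le_sin_pi_mul (by positivity) (by linarith)
    rw [show π * (2 * x) = 2 * π * x by ring] at h4x
    rw [pow_mul, ← mul_pow]
    gcongr
    nlinarith [pow_le_pow_left₀ (by positivity) h4x 2]
  have hexp : exp (-(b * π ^ 2 / 16)) ≤ exp (-(t * b) * sin (π * x) ^ 2) := by
    have hsq : sin (π * x) ^ 2 ≤ π ^ 2 * x ^ 2 := by simpa [mul_pow] using sin_sq_le_sq (x := π * x)
    rw [exp_le_exp]
    nlinarith [mul_le_mul_of_nonneg_left hsq (by positivity : 0 ≤ t * b),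
      mul_le_mul_of_nonneg_left htx (by positivity : 0 ≤ b * π ^ 2)]
  calc 16 ^ m * exp (-(b * π ^ 2 / 16)) * x ^ (2 * m)
      = (16 ^ m * x ^ (2 * m)) * exp (-(b * π ^ 2 / 16)) := by ring
    _ ≤ sinPowHeat m b t x := mul_le_mul hsin hexp (exp_pos _).le (by positivity)

lemma le_integral_sinPowHeat (m : ℕ) {b : ℝ} (hb : 0 < b) :
    ∃ c > 0, ∀ t, 1 ≤ t → c * t ^ (-(2 * m + 1) / 2 : ℝ) ≤ ∫ x in 0..1, sinPowHeat m b t x := by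
  refine ⟨16 ^ m * exp (-(b * π ^ 2 / 16)) / (4 ^ (2 * m + 1) * (2 * m + 1)), by positivity,
    fun t ht => ?_⟩
  have ht₀ : 0 < t := by linarith
  -- the window `[0, δ]` on which `t sin² (π x) ≤ π² / 16`
  set δ := t ^ (-1 / 2 : ℝ) / 4
  have hδ₀ : 0 ≤ δ := by positivity
  have hδ₁ : δ ≤ 1 := by
    have : t ^ (-1 / 2 : ℝ) ≤ 1 := rpow_le_one_of_one_le_of_nonpos ht (by norm_num)
    simp only [δ]
    linarith
  have htδ : t * δ ^ 2 = 1 / 16 := by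
    rw [div_pow, ← rpow_natCast, ← rpow_mul ht₀.le, show (-1 / 2 : ℝ) * (2 : ℕ) = -1 by norm_num,
      rpow_neg_one]
    field_simp
    norm_num
  have hδpow : δ ^ (2 * m + 1) = t ^ (-(2 * m + 1) / 2 : ℝ) / 4 ^ (2 * m + 1) := by
    rw [div_pow, ← rpow_natCast, ← rpow_mul ht₀.le]
    push_cast
    ring_nf
  calc 16 ^ m * exp (-(b * π ^ 2 / 16)) / (4 ^ (2 * m + 1) * (2 * m + 1)) *
        t ^ (-(2 * m + 1) / 2 : ℝ)
      = ∫ x in 0..δ, 16 ^ m * exp (-(b * π ^ 2 / 16)) * x ^ (2 * m) := by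
        rw [intervalIntegral.integral_const_mul, integral_pow, hδpow]
        push_cast
        field_simp
        ring
    _ ≤ ∫ x in 0..δ, sinPowHeat m b t x := by
        refine intervalIntegral.integral_mono_on hδ₀
          ((by fun_prop : Continuous _).intervalIntegrable _ _)
          ((continuous_sinPowHeat m b t).intervalIntegrable _ _) fun x hx => ?_
        refine le_sinPowHeat hb ht hx.1 ?_
        calc t * x ^ 2 ≤ t * δ ^ 2 := by gcongr; exacts [hx.1, hx.2]
          _ = 1 / 16 := htδ
    _ ≤ ∫ x in 0..1, sinPowHeat m b t x :=
        intervalIntegral.integral_mono_interval le_rfl hδ₀ hδ₁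
          (ae_of_all _ (sinPowHeat_nonneg m b t))
          ((continuous_sinPowHeat m b t).intervalIntegrable _ _)

theorem integral_sinPowHeat_isTheta (m : ℕ) {b : ℝ} (hb : 0 < b) :
    (fun t => ∫ x in 0..1, sinPowHeat m b t x) =Θ[𝓟 (Ici 1)]
      fun t => t ^ (-(2 * m + 1) / 2 : ℝ) := by
  obtain ⟨c₁, hc₁, hlower⟩ := le_integral_sinPowHeat m hb
  obtain ⟨c₂, hupper⟩ := integral_sinPowHeat_le m hb
  exact isTheta_principal_of_bounds hc₁ (fun t ht => rpow_nonneg (zero_le_one.trans ht) _)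
    fun t ht => ⟨hlower t ht, hupper t (zero_lt_one.trans_le ht)⟩

lemma setIntegral_cube_eq_mul_pow (n : ℕ) (b t : ℝ) :
    ∫ k in univ.pi (fun _ : Fin (n + 1) => Icc (0 : ℝ) 1),
        sin (2 * π * k 0) ^ 2 * exp (-(t * b) * ∑ j, sin (π * k j) ^ 2)
      = (∫ x in 0..1, sinPowHeat 1 b t x) * (∫ x in 0..1, sinPowHeat 0 b t x) ^ n := by
  have hprod : ∀ k : Fin (n + 1) → ℝ,
      sin (2 * π * k 0) ^ 2 * exp (-(t * b) * ∑ j, sin (π * k j) ^ 2)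
        = ∏ j, (Fin.cons (sinPowHeat 1 b t) fun _ => sinPowHeat 0 b t : Fin (n + 1) → ℝ → ℝ)
            j (k j) := by
    intro k
    simp only [Fin.prod_univ_succ, Fin.sum_univ_succ, Fin.cons_zero, Fin.cons_succ, sinPowHeat,
      pow_zero, pow_one, one_mul, mul_add, exp_add, Finset.mul_sum, exp_sum]
    ring
  simp_rw [hprod, setIntegral_univ_pi_prod, Fin.prod_univ_succ, Fin.cons_zero, Fin.cons_succ,
    Finset.prod_const, Finset.card_univ, Fintype.card_fin, integral_Icc_eq_integral_Ioc,
    ← intervalIntegral.integral_of_le zero_le_one]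

theorem setIntegral_cube_isTheta (n : ℕ) {b : ℝ} (hb : 0 < b) :
    (fun t => ∫ k in univ.pi (fun _ : Fin (n + 1) => Icc (0 : ℝ) 1),
        sin (2 * π * k 0) ^ 2 * exp (-(t * b) * ∑ j, sin (π * k j) ^ 2)) =Θ[𝓟 (Ici 1)]
      fun t => t ^ (-((n + 1 : ℕ) : ℝ) / 2 - 1) := by
  simp_rw [setIntegral_cube_eq_mul_pow]
  refine ((integral_sinPowHeat_isTheta 1 hb).mul
    ((integral_sinPowHeat_isTheta 0 hb).pow n)).trans_eventuallyEq ?_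
  refine eventuallyEq_principal.2 fun t ht => ?_
  have ht₀ : 0 < t := zero_lt_one.trans_le ht
  rw [← rpow_natCast (t ^ _) n, ← rpow_mul ht₀.le, ← rpow_add ht₀]
  push_cast
  ring_nf

lemma isTheta_setIntegral_mul_of_bounds {α X : Type*} [MeasurableSpace X] {μ : Measure X}
    {s : Set X} (hs : MeasurableSet s) {T : Set α} {w : X → ℝ} {G : α → X → ℝ} {a b : ℝ}
    (ha : 0 < a) (hw : ∀ k ∈ s, w k ∈ Icc a b) (hG : ∀ t, ∀ k ∈ s, 0 ≤ G t k)
    (hGi : ∀ t, IntegrableOn (G t) s μ) (hwG : ∀ t, IntegrableOn (fun k => w k * G t k) s μ) :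
    (fun t => ∫ k in s, w k * G t k ∂μ) =Θ[𝓟 T] fun t => ∫ k in s, G t k ∂μ := by
  refine isTheta_principal_of_bounds (c₂ := b) ha (fun t _ => setIntegral_nonneg hs (hG t))
    fun t _ => ⟨?_, ?_⟩ <;> rw [← integral_const_mul]
  · exact setIntegral_mono_on ((hGi t).const_mul a) (hwG t) hs fun k hk =>
      mul_le_mul_of_nonneg_right (hw k hk).1 (hG t k hk)
  · exact setIntegral_mono_on (hwG t) ((hGi t).const_mul b) hs fun k hk =>
      mul_le_mul_of_nonneg_right (hw k hk).2 (hG t k hk)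

lemma div_add_mul_sum_sin_sq_mem_Icc {d : ℕ} {c ν α : ℝ} (hc : 0 ≤ c) (hν : 0 < ν) (hα : 0 < α)
    (k : Fin d → ℝ) :
    c / (ν + 4 * α * ∑ j, sin (π * k j) ^ 2) ∈ Icc (c / (ν + 4 * α * d)) (c / ν) := by
  have hS₀ : 0 ≤ ∑ j, sin (π * k j) ^ 2 := by positivity
  have hS : ∑ j, sin (π * k j) ^ 2 ≤ d :=
    (Finset.sum_le_sum fun j _ => sin_sq_le_one _).trans (by simp)
  constructor <;> apply div_le_div_of_nonneg_left hc <;> nlinarith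

theorem setIntegral_cube_div_mul_isTheta (n : ℕ) {α ν b : ℝ} (hα : 0 < α) (hν : 0 < ν)
    (hb : 0 < b) :
    (fun t => ∫ k in univ.pi (fun _ : Fin (n + 1) => Icc (0 : ℝ) 1),
        4 * π ^ 2 * α ^ 2 / (ν + 4 * α * ∑ j, sin (π * k j) ^ 2) *
          (sin (2 * π * k 0) ^ 2 * exp (-(t * b) * ∑ j, sin (π * k j) ^ 2))) =Θ[𝓟 (Ici 1)]
      fun t => t ^ (-((n + 1 : ℕ) : ℝ) / 2 - 1) := by
  have hden : ∀ k : Fin (n + 1) → ℝ, ν + 4 * α * ∑ j, sin (π * k j) ^ 2 ≠ 0 :=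
    fun k => by positivity
  have hcube : IsCompact (univ.pi fun _ : Fin (n + 1) => Icc (0 : ℝ) 1) :=
    isCompact_univ_pi fun _ => isCompact_Icc
  refine (isTheta_setIntegral_mul_of_bounds (MeasurableSet.univ_pi fun _ => measurableSet_Icc)
    (by positivity) (fun k _ => div_add_mul_sum_sin_sq_mem_Icc (by positivity) hν hα k)
    (fun t k _ => by positivity) (fun t => ?_) (fun t => ?_)).trans (setIntegral_cube_isTheta n hb)
  all_goals
    refine ContinuousOn.integrableOn_compact hcube (Continuous.continuousOn ?_)
    fun_prop (disch := exact hden _)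

/-- Pinned harmonic case: the current-current correlation
`C(t) = (E²/(4π²d)) ∫_{[0,1]^d} (∂_{k¹}ω)² e^{−tγψ(k)} dk`, with
`(∂_{k¹}ω(k))² = 4π²α² sin²(2πk¹)/(ν + 4α ∑ sin²(πk^j))` and `ψ(k) = 8∑ sin²(πk^j)`,
decays like `t^{−d/2−1}` when `ν > 0`. -/
theorem stmt_7 (d : ℕ) (hd : 1 ≤ d) (α ν E γ : ℝ) (hα : 0 < α) (hν : 0 < ν)
    (hE : 0 < E) (hγ : 0 < γ)
    (C : ℝ → ℝ)
    (hC : ∀ t : ℝ, C t = E^2 / (4 * π^2 * d) *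
      ∫ k in Set.univ.pi (fun _ : Fin d => Set.Icc (0:ℝ) 1),
        (4 * π^2 * α^2 * Real.sin (2 * π * k ⟨0, hd⟩)^2 /
            (ν + 4 * α * ∑ j : Fin d, Real.sin (π * k j)^2)) *
          Real.exp (-t * γ * (8 * ∑ j : Fin d, Real.sin (π * k j)^2))) :
    ∃ c₁ c₂ : ℝ, 0 < c₁ ∧ c₁ ≤ c₂ ∧ ∀ t : ℝ, 1 ≤ t →
      c₁ * t ^ (-(d : ℝ)/2 - 1) ≤ C t ∧ C t ≤ c₂ * t ^ (-(d : ℝ)/2 - 1) := by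
  obtain ⟨n, rfl⟩ : ∃ n, d = n + 1 := ⟨d - 1, by omega⟩
  have hC' : ∀ t, C t = E ^ 2 / (4 * π ^ 2 * (n + 1 : ℕ)) *
      ∫ k in univ.pi (fun _ : Fin (n + 1) => Icc (0 : ℝ) 1),
        4 * π ^ 2 * α ^ 2 / (ν + 4 * α * ∑ j, sin (π * k j) ^ 2) *
          (sin (2 * π * k 0) ^ 2 * exp (-(t * (8 * γ)) * ∑ j, sin (π * k j) ^ 2)) := by
    intro t
    simp_rw [hC, Fin.zero_eta, show ∀ S : ℝ, -t * γ * (8 * S) = -(t * (8 * γ)) * S by intro S; ring,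
      mul_div_right_comm _ (sin _ ^ 2), mul_assoc]
  have hΘ : C =Θ[𝓟 (Ici 1)] fun t : ℝ => t ^ (-((n + 1 : ℕ) : ℝ) / 2 - 1) := by
    simp_rw [funext hC']
    exact (setIntegral_cube_div_mul_isTheta n hα hν (by positivity)).const_mul_left (by positivity)
  have hC_nonneg : ∀ t, 0 ≤ C t := fun t => by
    rw [hC']
    exact mul_nonneg (by positivity) (integral_nonneg fun k => by positivity)
  obtain ⟨c₁, c₂, hc₁, hbounds⟩ := hΘ.exists_bounds_of_nonneg (fun t _ => hC_nonneg t)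
    fun t ht => rpow_nonneg (zero_le_one.trans ht) _
  have hc₁₂ := hbounds 1 self_mem_Ici
  rw [one_rpow, mul_one, mul_one] at hc₁₂
  exact ⟨c₁, c₂, hc₁, hc₁₂.1.trans hc₁₂.2, hbounds⟩
end

section
/- For d ≥ 1, α > 0, ν = 0, the function C(t) = (E²/(4π²d)) ∫_{[0,1]^d} (∂_{k¹}ω(k))² e^{−tγψ(k)} dk with ω(k) = 2√α (Σ_j sin²(πk^j))^{1/2} and ψ(k) = 8Σ_j sin²(πk^j) (for d ≥ 2) satisfies: there exist constants 0 < c₁ ≤ c₂ such that c₁ t^{−d/2} ≤ C(t) ≤ c₂ t^{−d/2} for all t ≥ 1. -/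
open MeasureTheory Real

private lemma div_le_of_le_mul'' {a b c : ℝ} (hb : 0 ≤ b) (hc : 0 ≤ c) (h : a ≤ c * b) :
    a / b ≤ c := by
  rcases hb.eq_or_lt with h0 | h0
  · rw [← h0, div_zero]; exact hc
  · exact (div_le_iff₀ h0).2 h

private lemma inv_sqrt_pow_eq' {t : ℝ} (ht : 0 < t) (d : ℕ) :
    ((Real.sqrt t)⁻¹) ^ d = t ^ (-(d : ℝ)/2) := by
  have h1 : (Real.sqrt t)⁻¹ = t ^ (-(1/2) : ℝ) := by
    rw [Real.sqrt_eq_rpow, ← Real.rpow_neg ht.le]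
  rw [h1, ← Real.rpow_natCast (t ^ (-(1/2) : ℝ)) d, ← Real.rpow_mul ht.le]
  congr 1
  ring

private lemma gauss_int' {b : ℝ} (hb : 0 < b) :
    Integrable (fun u : ℝ => Real.exp (-b * u^2) + Real.exp (-b * (u-1)^2)) :=
  (integrable_exp_neg_mul_sq hb).add ((integrable_exp_neg_mul_sq hb).comp_sub_right 1)

private lemma gauss_val' {b : ℝ} (hb : 0 < b) :
    ∫ u : ℝ, (Real.exp (-b * u^2) + Real.exp (-b * (u-1)^2)) = 2 * Real.sqrt (π / b) := by
  rw [integral_add (integrable_exp_neg_mul_sq hb)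
      ((integrable_exp_neg_mul_sq hb).comp_sub_right 1),
    integral_sub_right_eq_self (fun u : ℝ => Real.exp (-b * u^2)) 1, integral_gaussian]
  ring

private lemma ptwise_bound' {b u : ℝ} (hb : 0 ≤ b) (h0 : 0 ≤ u) (h1 : u ≤ 1) :
    Real.exp (-b * Real.sin (π * u)^2) ≤
      Real.exp (-(4*b) * u^2) + Real.exp (-(4*b) * (u-1)^2) := by
  have hπ := Real.pi_pos
  have hsq : 4 * u^2 ≤ Real.sin (π*u)^2 ∨ 4 * (u-1)^2 ≤ Real.sin (π*u)^2 := by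
    rcases le_total u (1/2) with hu | hu
    · left
      have hs : 2 * u ≤ Real.sin (π * u) := by
        have h := Real.mul_le_sin (x := π * u) (by positivity) (by nlinarith)
        have he : 2/π * (π*u) = 2*u := by field_simp
        linarith [he ▸ h]
      calc 4*u^2 = (2*u)^2 := by ring
        _ ≤ _ := pow_le_pow_left₀ (by positivity) hs 2
    · right
      have hs : 2 * (1-u) ≤ Real.sin (π * u) := by
        have h2 : Real.sin (π*u) = Real.sin (π * (1-u)) := by
          rw [show π * (1-u) = π - π * u by ring, Real.sin_pi_sub]
        rw [h2]
        have h := Real.mul_le_sin (x := π * (1-u)) (by nlinarith) (by nlinarith)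
        have he : 2/π * (π*(1-u)) = 2*(1-u) := by field_simp
        linarith [he ▸ h]
      calc 4*(u-1)^2 = (2*(1-u))^2 := by ring
        _ ≤ _ := pow_le_pow_left₀ (by linarith) hs 2
  rcases hsq with h | h
  · calc Real.exp (-b * Real.sin (π*u)^2) ≤ Real.exp (-(4*b) * u^2) := by
          apply Real.exp_le_exp.2
          nlinarith [mul_le_mul_of_nonneg_left h hb]
      _ ≤ _ := le_add_of_nonneg_right (Real.exp_pos _).le
  · calc Real.exp (-b * Real.sin (π*u)^2) ≤ Real.exp (-(4*b) * (u-1)^2) := by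
          apply Real.exp_le_exp.2
          nlinarith [mul_le_mul_of_nonneg_left h hb]
      _ ≤ _ := le_add_of_nonneg_left (Real.exp_pos _).le

set_option maxHeartbeats 1000000 in
/-- Unpinned harmonic case (`ν = 0`): the current-current correlation
`C(t) = (E²/(4π²d)) ∫_{[0,1]^d} (∂_{k¹}ω)² e^{−tγψ(k)} dk`, with
`(∂_{k¹}ω(k))² = 4π²α sin²(2πk¹)/(∑ sin²(πk^j))` and `ψ(k) = 8∑ sin²(πk^j)`,
decays like `t^{−d/2}`. -/
theorem stmt_8 (d : ℕ) (hd : 1 ≤ d) (α E γ : ℝ) (hα : 0 < α)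
    (hE : 0 < E) (hγ : 0 < γ)
    (C : ℝ → ℝ)
    (hC : ∀ t : ℝ, C t = E^2 / (4 * π^2 * d) *
      ∫ k in Set.univ.pi (fun _ : Fin d => Set.Icc (0:ℝ) 1),
        (4 * π^2 * α * Real.sin (2 * π * k ⟨0, hd⟩)^2 /
            (∑ j : Fin d, Real.sin (π * k j)^2)) *
          Real.exp (-t * γ * (8 * ∑ j : Fin d, Real.sin (π * k j)^2))) :
    ∃ c₁ c₂ : ℝ, 0 < c₁ ∧ c₁ ≤ c₂ ∧ ∀ t : ℝ, 1 ≤ t →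
      c₁ * t ^ (-(d : ℝ)/2) ≤ C t ∧ C t ≤ c₂ * t ^ (-(d : ℝ)/2) := by
  have hπ := Real.pi_pos
  have hd0 : (0:ℝ) < d := by exact_mod_cast hd
  set i0 : Fin d := ⟨0, hd⟩ with hi0
  set box : Set (Fin d → ℝ) := Set.univ.pi (fun _ : Fin d => Set.Icc (0:ℝ) 1) with hboxdef
  set S : (Fin d → ℝ) → ℝ := fun k => ∑ j : Fin d, Real.sin (π * k j)^2 with hSdef
  set f : ℝ → (Fin d → ℝ) → ℝ := fun t k =>
    4 * π^2 * α * Real.sin (2 * π * k i0)^2 / S k *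
      Real.exp (-t * γ * (8 * S k)) with hfdef
  have hCt : ∀ t, C t = E^2 / (4 * π^2 * d) * ∫ k in box, f t k := by
    intro t
    rw [hC t]
  -- basic facts
  have hSnn : ∀ k, 0 ≤ S k := fun k => Finset.sum_nonneg fun j _ => sq_nonneg _
  have hS0 : ∀ k : Fin d → ℝ, Real.sin (π * k i0)^2 ≤ S k := by
    intro k
    rw [hSdef]
    exact Finset.single_le_sum (f := fun j => Real.sin (π * k j)^2)
      (fun j _ => sq_nonneg _) (Finset.mem_univ i0)
  have hfnn : ∀ t k, 0 ≤ f t k := fun t k =>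
    mul_nonneg (div_nonneg (by positivity) (hSnn k)) (Real.exp_pos _).le
  have hmeasf : ∀ t, Measurable (f t) := by
    intro t
    apply Measurable.mul
    · apply Measurable.div
      · fun_prop
      · rw [hSdef]; fun_prop
    · rw [hSdef]; fun_prop
  have hnum_le : ∀ k : Fin d → ℝ, Real.sin (2 * π * k i0)^2 ≤ 4 * S k := by
    intro k
    have h1 : Real.sin (2*π*k i0)^2 = 4 * Real.sin (π * k i0)^2 * Real.cos (π * k i0)^2 := by
      rw [show 2*π*k i0 = 2*(π * k i0) by ring, Real.sin_two_mul]; ring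
    calc Real.sin (2*π*k i0)^2 = 4 * Real.sin (π*k i0)^2 * Real.cos (π*k i0)^2 := h1
      _ ≤ 4 * Real.sin (π*k i0)^2 * 1 :=
          mul_le_mul_of_nonneg_left (Real.cos_sq_le_one _) (by positivity)
      _ = 4 * Real.sin (π*k i0)^2 := by ring
      _ ≤ 4 * S k := by linarith [hS0 k]
  have hdiv_le : ∀ k, 4 * π^2 * α * Real.sin (2 * π * k i0)^2 / S k ≤ 16 * π^2 * α := by
    intro k
    apply div_le_of_le_mul'' (hSnn k) (by positivity)
    calc 4*π^2*α*Real.sin (2*π*k i0)^2 ≤ 4*π^2*α*(4*S k) :=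
        mul_le_mul_of_nonneg_left (hnum_le k) (by positivity)
      _ = 16*π^2*α * S k := by ring
  have hvolbox : volume box < ⊤ := by
    rw [hboxdef]
    exact (isCompact_univ_pi fun _ => isCompact_Icc).measure_lt_top
  have hInt : ∀ t : ℝ, 0 ≤ t → IntegrableOn (f t) box := by
    intro t ht
    apply Integrable.mono' (g := fun _ => 16*π^2*α)
      (integrableOn_const hvolbox.ne) ((hmeasf t).aestronglyMeasurable.restrict)
    filter_upwards with k
    rw [Real.norm_eq_abs, abs_of_nonneg (hfnn t k)]
    calc f t k ≤ (16*π^2*α) * Real.exp (-t * γ * (8 * S k)) := by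
          rw [hfdef]
          exact mul_le_mul_of_nonneg_right (hdiv_le k) (Real.exp_pos _).le
      _ ≤ (16*π^2*α) * 1 := by
          apply mul_le_mul_of_nonneg_left _ (by positivity)
          rw [← Real.exp_zero]
          apply Real.exp_le_exp.2
          have h8 : 0 ≤ 8 * S k := by linarith [hSnn k]
          nlinarith [mul_nonneg (mul_nonneg ht hγ.le) h8]
      _ = 16*π^2*α := by ring
  set A : ℝ := 2 * Real.sqrt (π / (32*γ)) with hAdef
  have hA : 0 < A := by
    rw [hAdef]
    have : 0 < π / (32*γ) := by positivity
    positivity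
  -- upper bound
  have hupper : ∀ t : ℝ, 1 ≤ t →
      ∫ k in box, f t k ≤ (16*π^2*α * A^d) * t ^ (-(d:ℝ)/2) := by
    intro t ht
    have ht0 : 0 < t := lt_of_lt_of_le one_pos ht
    have hb : (0:ℝ) < 8*t*γ := by positivity
    set G : ℝ → ℝ := fun u =>
      Real.exp (-(4*(8*t*γ)) * u^2) + Real.exp (-(4*(8*t*γ)) * (u-1)^2) with hGdef
    have hGnn : ∀ u, 0 ≤ G u := fun u => by
      rw [hGdef]; positivity
    have hGint : Integrable G := gauss_int' (by positivity)
    have hGprod : Integrable (fun k : Fin d → ℝ => ∏ j : Fin d, G (k j)) :=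
      Integrable.fintype_prod (f := fun _ : Fin d => G) fun _ => hGint
    have hptf : ∀ k ∈ box, f t k ≤ 16*π^2*α * ∏ j : Fin d, G (k j) := by
      intro k hk
      rw [hboxdef, Set.mem_univ_pi] at hk
      have hexp : Real.exp (-t*γ*(8*S k)) =
          ∏ j : Fin d, Real.exp (-(8*t*γ) * Real.sin (π * k j)^2) := by
        rw [← Real.exp_sum, ← Finset.mul_sum]
        congr 1
        rw [hSdef]
        ring
      calc f t k = (4*π^2*α*Real.sin (2*π*k i0)^2 / S k) *
            ∏ j : Fin d, Real.exp (-(8*t*γ) * Real.sin (π * k j)^2) := by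
            rw [hfdef, ← hexp]
        _ ≤ (16*π^2*α) * ∏ j : Fin d, G (k j) := by
            apply mul_le_mul (hdiv_le k) ?_
              (Finset.prod_nonneg fun j _ => (Real.exp_pos _).le) (by positivity)
            apply Finset.prod_le_prod (fun j _ => (Real.exp_pos _).le)
            intro j _
            exact ptwise_bound' hb.le (hk j).1 (hk j).2
    have hBoxMeas : MeasurableSet box := by
      rw [hboxdef]
      exact MeasurableSet.univ_pi fun _ => measurableSet_Icc
    have step1 : ∫ k in box, f t k ≤ ∫ k in box, 16*π^2*α * ∏ j : Fin d, G (k j) :=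
      setIntegral_mono_on (hInt t (by linarith)) ((hGprod.const_mul _).integrableOn)
        hBoxMeas hptf
    have step2 : ∫ k in box, 16*π^2*α * ∏ j : Fin d, G (k j) ≤
        ∫ k : Fin d → ℝ, 16*π^2*α * ∏ j : Fin d, G (k j) := by
      apply setIntegral_le_integral (hGprod.const_mul _)
      filter_upwards with k
      have : 0 ≤ ∏ j : Fin d, G (k j) := Finset.prod_nonneg fun j _ => hGnn _
      positivity
    have hval : ∫ u : ℝ, G u = A * (Real.sqrt t)⁻¹ := by
      rw [hGdef, gauss_val' (by positivity)]
      have h1 : π / (4*(8*t*γ)) = π/(32*γ) * t⁻¹ := by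
        rw [show 4*(8*t*γ) = 32*γ*t by ring, ← div_div, div_eq_mul_inv]
      rw [h1, Real.sqrt_mul (by positivity), Real.sqrt_inv, hAdef]
      ring
    have step3 : ∫ k : Fin d → ℝ, 16*π^2*α * ∏ j : Fin d, G (k j) =
        (16*π^2*α * A^d) * t ^ (-(d:ℝ)/2) := by
      rw [integral_const_mul, integral_fintype_prod_volume_eq_pow G, Fintype.card_fin,
        hval, mul_pow, inv_sqrt_pow_eq' ht0 d]
      ring
    linarith [step1, step2, step3.le, step3.ge]
  -- lower bound
  set m : ℝ := 16*α/(d:ℝ) * Real.exp (-(γ*(d:ℝ)*π^2/2)) with hmdef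
  have hm : 0 < m := by rw [hmdef]; positivity
  have hlower : ∀ t : ℝ, 1 ≤ t →
      (m * ((4:ℝ)⁻¹^d/2)) * t ^ (-(d:ℝ)/2) ≤ ∫ k in box, f t k := by
    intro t ht
    have ht0 : 0 < t := lt_of_lt_of_le one_pos ht
    have hst : 0 < Real.sqrt t := Real.sqrt_pos.2 ht0
    have hst1 : 1 ≤ Real.sqrt t := Real.one_le_sqrt.2 ht
    set s : ℝ := (4*Real.sqrt t)⁻¹ with hsdef
    have hs0 : 0 < s := by rw [hsdef]; positivity
    have hs14 : s ≤ 1/4 := by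
      rw [hsdef]
      rw [show (1:ℝ)/4 = 4⁻¹ by norm_num]
      apply inv_anti₀ (by norm_num)
      linarith
    have h16 : (4*Real.sqrt t)^2 = 16*t := by
      rw [mul_pow, Real.sq_sqrt ht0.le]; norm_num
    have hts : t * s^2 = 1/16 := by
      have hs2 : s^2 = (16*t)⁻¹ := by rw [hsdef, inv_pow, h16]
      rw [hs2]
      field_simp
    set B : Set (Fin d → ℝ) :=
      Set.univ.pi (fun j : Fin d => Set.Icc (if j = i0 then s/2 else 0) s) with hBdef
    have hBsub : B ⊆ box := by
      rw [hBdef, hboxdef]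
      apply Set.pi_mono
      intro j _
      apply Set.Icc_subset_Icc
      · split_ifs <;> linarith
      · linarith
    have hBmeas : MeasurableSet B := by
      rw [hBdef]
      exact MeasurableSet.univ_pi fun _ => measurableSet_Icc
    have hvolB : volume B < ⊤ := lt_of_le_of_lt (measure_mono hBsub) hvolbox
    -- pointwise lower bound on B
    have hlow : ∀ k ∈ B, m ≤ f t k := by
      intro k hk
      rw [hBdef, Set.mem_univ_pi] at hk
      have hk0 : s/2 ≤ k i0 ∧ k i0 ≤ s := by
        have := hk i0
        rw [if_pos rfl] at this
        exact this
      have hkj : ∀ j, 0 ≤ k j ∧ k j ≤ s := by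
        intro j
        have := hk j
        refine ⟨le_trans ?_ this.1, this.2⟩
        split_ifs <;> linarith
      have hk0pos : 0 < k i0 := lt_of_lt_of_le (by linarith) hk0.1
      -- numerator lower bound
      have hsin2 : 4*s^2 ≤ Real.sin (2*π*k i0)^2 := by
        have harg1 : 0 ≤ 2*π*k i0 := by positivity
        have harg2 : 2*π*k i0 ≤ π/2 := by
          nlinarith [mul_nonneg hπ.le (by linarith : (0:ℝ) ≤ 1/4 - k i0)]
        have h := Real.mul_le_sin harg1 harg2
        have he : 2/π*(2*π*k i0) = 4*k i0 := by field_simp; ring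
        rw [he] at h
        have h4 : 2*s ≤ Real.sin (2*π*k i0) := by linarith [hk0.1]
        calc 4*s^2 = (2*s)^2 := by ring
          _ ≤ _ := pow_le_pow_left₀ (by positivity) h4 2
      -- S upper bound
      have hSup : S k ≤ (d:ℝ)*(π^2*s^2) := by
        rw [hSdef]
        calc ∑ j : Fin d, Real.sin (π * k j)^2 ≤ ∑ _j : Fin d, (π*s)^2 := by
              apply Finset.sum_le_sum
              intro j _
              calc Real.sin (π*k j)^2 ≤ (π*k j)^2 := Real.sin_sq_le_sq
                _ ≤ (π*s)^2 := by
                    apply pow_le_pow_left₀ (mul_nonneg hπ.le (hkj j).1)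
                    exact mul_le_mul_of_nonneg_left (hkj j).2 hπ.le
          _ = (d:ℝ)*(π^2*s^2) := by
              rw [Finset.sum_const, Finset.card_univ, Fintype.card_fin, nsmul_eq_mul]
              ring
      -- S lower bound
      have hSpos : 0 < S k := by
        have h1 : 0 < Real.sin (π * k i0) := by
          apply Real.sin_pos_of_pos_of_lt_pi (mul_pos hπ hk0pos)
          nlinarith [mul_pos hπ (by linarith : (0:ℝ) < 1 - k i0)]
        exact lt_of_lt_of_le (pow_pos h1 2) (hS0 k)
      -- division lower bound
      have hdivlow : 16*α/(d:ℝ) ≤ 4*π^2*α*Real.sin (2*π*k i0)^2 / S k := by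
        have h1 : 4*π^2*α*(4*s^2) ≤ 4*π^2*α*Real.sin (2*π*k i0)^2 :=
          mul_le_mul_of_nonneg_left hsin2 (by positivity)
        calc 16*α/(d:ℝ) = (4*π^2*α*(4*s^2)) / ((d:ℝ)*(π^2*s^2)) := by
              rw [div_eq_div_iff (by positivity) (by positivity)]
              ring
          _ ≤ _ := div_le_div₀ (by positivity) h1 hSpos hSup
      have hexplow : Real.exp (-(γ*(d:ℝ)*π^2/2)) ≤ Real.exp (-t * γ * (8 * S k)) := by
        apply Real.exp_le_exp.2
        have h1 : t*γ*(8*S k) ≤ t*γ*(8*((d:ℝ)*(π^2*s^2))) := by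
          apply mul_le_mul_of_nonneg_left (by linarith) (mul_nonneg ht0.le hγ.le)
        have h2 : t*γ*(8*((d:ℝ)*(π^2*s^2))) = γ*(d:ℝ)*π^2/2 := by
          linear_combination (8*γ*(d:ℝ)*π^2) * hts
        nlinarith
      calc m = (16*α/(d:ℝ)) * Real.exp (-(γ*(d:ℝ)*π^2/2)) := hmdef
        _ ≤ (4*π^2*α*Real.sin (2*π*k i0)^2 / S k) * Real.exp (-t * γ * (8 * S k)) :=
            mul_le_mul hdivlow hexplow (Real.exp_pos _).le
              (le_trans (by positivity) hdivlow)
        _ = f t k := by rw [hfdef]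
    -- volume of B
    have hvolBval : (volume B).toReal = s^d/2 := by
      rw [hBdef, volume_pi_pi]
      simp only [Real.volume_Icc]
      rw [← ENNReal.ofReal_prod_of_nonneg (fun j _ => by split_ifs <;> linarith)]
      rw [ENNReal.toReal_ofReal (Finset.prod_nonneg fun j _ => by split_ifs <;> linarith)]
      rw [← Finset.mul_prod_erase Finset.univ _ (Finset.mem_univ i0), if_pos rfl]
      rw [Finset.prod_congr rfl
        (fun j hj => by rw [if_neg (Finset.ne_of_mem_erase hj), sub_zero])]
      rw [Finset.prod_const, Finset.card_erase_of_mem (Finset.mem_univ i0),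
        Finset.card_univ, Fintype.card_fin]
      have hd1 : d - 1 + 1 = d := Nat.succ_pred_eq_of_pos hd
      calc (s - s/2) * s^(d-1) = s^(d-1) * s / 2 := by ring
        _ = s^d/2 := by rw [← pow_succ, hd1]
    have hsd : s^d = (4:ℝ)⁻¹^d * t ^ (-(d:ℝ)/2) := by
      rw [hsdef, mul_inv, mul_pow, inv_sqrt_pow_eq' ht0 d]
    calc (m * ((4:ℝ)⁻¹^d/2)) * t ^ (-(d:ℝ)/2) = (volume B).toReal * m := by
          rw [hvolBval, hsd]
          ring
      _ = ∫ _k in B, m := by rw [setIntegral_const, smul_eq_mul]; rfl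
      _ ≤ ∫ k in B, f t k := by
          apply setIntegral_mono_on (integrableOn_const hvolB.ne)
            ((hInt t (by linarith)).mono_set hBsub) hBmeas hlow
      _ ≤ ∫ k in box, f t k := by
          apply setIntegral_mono_set (hInt t (by linarith))
            (Filter.Eventually.of_forall fun k => hfnn t k)
            (HasSubset.Subset.eventuallyLE hBsub)
  -- assembly
  set K : ℝ := E^2 / (4 * π^2 * d) with hKdef
  have hK : 0 < K := by rw [hKdef]; positivity
  set c₁ : ℝ := K * (m * ((4:ℝ)⁻¹^d/2)) with hc1def
  set c₂ : ℝ := K * (16*π^2*α * A^d) with hc2def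
  have hc1 : 0 < c₁ := by
    rw [hc1def]
    positivity
  have hmain : ∀ t : ℝ, 1 ≤ t → c₁ * t ^ (-(d:ℝ)/2) ≤ C t ∧ C t ≤ c₂ * t ^ (-(d:ℝ)/2) := by
    intro t ht
    rw [hCt t]
    constructor
    · calc c₁ * t ^ (-(d:ℝ)/2) = K * ((m * ((4:ℝ)⁻¹^d/2)) * t ^ (-(d:ℝ)/2)) := by
            rw [hc1def]; ring
        _ ≤ K * ∫ k in box, f t k := mul_le_mul_of_nonneg_left (hlower t ht) hK.le
    · calc K * ∫ k in box, f t k ≤ K * ((16*π^2*α * A^d) * t ^ (-(d:ℝ)/2)) :=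
            mul_le_mul_of_nonneg_left (hupper t ht) hK.le
        _ = c₂ * t ^ (-(d:ℝ)/2) := by rw [hc2def]; ring
  refine ⟨c₁, c₂, hc1, ?_, hmain⟩
  have h1 := hmain 1 le_rfl
  rw [Real.one_rpow] at h1
  linarith [h1.1, h1.2]
end

section
/- Let G_N: ℤ_N^d → ℝ (d ≥ 2) solve N^{−1} G_N(z) − 2γ (ΔG_N)(z) = −(1/2)[δ_0(z) + δ_{e₁}(z)] on the discrete torus ℤ_N^d. Then the discrete second difference in the first direction is uniformly bounded: |G_N(x+e₁) + G_N(x−e₁) − 2G_N(x)| ≤ 1/(2γ) for all x ∈ ℤ_N^d and all N. -/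
open Finset

namespace Stmt12Aux

noncomputable section

variable {d N : ℕ} [NeZero N]

abbrev V (d N : ℕ) := (Fin d → ZMod N) → ℝ

def ip (u v : V d N) : ℝ := ∑ x, u x * v x

def Dop (c : Fin d → ZMod N) (u : V d N) : V d N := fun x => u (x + c) - u x

def Lop (c : Fin d → ZMod N) (u : V d N) : V d N :=
  fun x => 2 * u x - u (x + c) - u (x - c)

def Bop (γ : ℝ) (e : Fin d → Fin d → ZMod N) (u : V d N) : V d N :=
  fun x => (N : ℝ)⁻¹ * u x + 2 * γ * ∑ j, Lop (e j) u x

lemma sum_shift (c : Fin d → ZMod N) (F : (Fin d → ZMod N) → ℝ) :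
    ∑ x, F (x + c) = ∑ x, F x :=
  Fintype.sum_equiv (Equiv.addRight c) _ _ (fun _ => rfl)

lemma ip_comm (u v : V d N) : ip u v = ip v u := by
  unfold ip; exact Finset.sum_congr rfl fun x _ => mul_comm _ _

lemma ip_self_nonneg (u : V d N) : 0 ≤ ip u u :=
  Finset.sum_nonneg fun x _ => mul_self_nonneg _

lemma ip_L (c : Fin d → ZMod N) (a b : V d N) :
    ip (Lop c a) b = ip (Dop c a) (Dop c b) := by
  unfold ip Lop Dop
  have h1 : ∑ x, a (x + c) * b (x + c) = ∑ x, a x * b x :=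
    sum_shift c (fun x => a x * b x)
  have h2 : ∑ x, a x * b (x + c) = ∑ x, a (x - c) * b x := by
    have := sum_shift c (fun x => a (x - c) * b x)
    simpa [add_sub_cancel_right] using this
  rw [← sub_eq_zero, ← Finset.sum_sub_distrib]
  have expand : ∀ x : Fin d → ZMod N,
      (2 * a x - a (x + c) - a (x - c)) * b x - (a (x + c) - a x) * (b (x + c) - b x)
        = (a x * b x - a (x + c) * b (x + c)) + (a x * b (x + c) - a (x - c) * b x) := by
    intro x; ring
  simp_rw [expand]
  rw [Finset.sum_add_distrib, Finset.sum_sub_distrib, Finset.sum_sub_distrib, h1, h2]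
  ring

lemma D_L_comm (c c' : Fin d → ZMod N) (u : V d N) :
    Dop c (Lop c' u) = Lop c' (Dop c u) := by
  funext x
  unfold Dop Lop
  rw [show x + c + c' = x + c' + c from by abel,
    show x + c - c' = x - c' + c from by abel]
  ring

lemma ip_L_L (c c' : Fin d → ZMod N) (a b : V d N) :
    ip (Lop c a) (Lop c' b) = ip (Dop c (Dop c' a)) (Dop c (Dop c' b)) := by
  rw [ip_comm, ip_L, D_L_comm, ip_comm, ip_L]

lemma ip_B (γ : ℝ) (e : Fin d → Fin d → ZMod N) (u v : V d N) :
    ip u (Bop γ e v) = (N : ℝ)⁻¹ * ip u v + 2 * γ * ∑ j, ip u (Lop (e j) v) := by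
  unfold ip Bop
  have h1 : ∑ x, u x * ((N : ℝ)⁻¹ * v x) = (N : ℝ)⁻¹ * ∑ x, u x * v x := by
    rw [Finset.mul_sum]; exact Finset.sum_congr rfl fun x _ => by ring
  have h2 : ∑ x, u x * (2 * γ * ∑ j, Lop (e j) v x)
      = 2 * γ * ∑ j, ∑ x, u x * Lop (e j) v x := by
    calc ∑ x, u x * (2 * γ * ∑ j, Lop (e j) v x)
        = ∑ x, ∑ j, 2 * γ * (u x * Lop (e j) v x) := by
          refine Finset.sum_congr rfl fun x _ => ?_
          rw [Finset.mul_sum, Finset.mul_sum]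
          exact Finset.sum_congr rfl fun j _ => by ring
      _ = ∑ j, ∑ x, 2 * γ * (u x * Lop (e j) v x) := Finset.sum_comm
      _ = 2 * γ * ∑ j, ∑ x, u x * Lop (e j) v x := by
          rw [Finset.mul_sum]
          exact Finset.sum_congr rfl fun j _ => by rw [Finset.mul_sum]
  simp_rw [mul_add]
  rw [Finset.sum_add_distrib, h1, h2]

lemma ip_L_B (γ : ℝ) (e : Fin d → Fin d → ZMod N) (c : Fin d → ZMod N) (u v : V d N) :
    ip (Lop c u) (Bop γ e v)
      = (N : ℝ)⁻¹ * ip (Dop c u) (Dop c v)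
        + 2 * γ * ∑ j, ip (Dop c (Dop (e j) u)) (Dop c (Dop (e j) v)) := by
  rw [ip_B, ip_L]
  congr 2
  exact Finset.sum_congr rfl fun j _ => ip_L_L c (e j) u v

lemma self_B_nonneg {γ : ℝ} (hγ : 0 ≤ γ) (e : Fin d → Fin d → ZMod N) (u : V d N) :
    0 ≤ ip u (Bop γ e u) := by
  rw [ip_B]
  have : ∀ c, ip u (Lop c u) = ip (Dop c u) (Dop c u) := fun c => by rw [ip_comm, ip_L]
  simp_rw [this]
  have hN : (0:ℝ) ≤ (N : ℝ)⁻¹ := by positivity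
  refine add_nonneg (mul_nonneg hN (ip_self_nonneg u)) (mul_nonneg (by linarith) ?_)
  exact Finset.sum_nonneg fun j _ => ip_self_nonneg _

lemma L_B_nonneg {γ : ℝ} (hγ : 0 ≤ γ) (e : Fin d → Fin d → ZMod N)
    (c : Fin d → ZMod N) (u : V d N) : 0 ≤ ip (Lop c u) (Bop γ e u) := by
  rw [ip_L_B]
  have hN : (0:ℝ) ≤ (N : ℝ)⁻¹ := by positivity
  refine add_nonneg (mul_nonneg hN (ip_self_nonneg _)) (mul_nonneg (by linarith) ?_)
  exact Finset.sum_nonneg fun j _ => ip_self_nonneg _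

def Q (γ : ℝ) (e : Fin d → Fin d → ZMod N) (i0 : Fin d) (a b : V d N) : ℝ :=
  2 * γ * ((N : ℝ)⁻¹ * ip (Dop (e i0) a) (Dop (e i0) b)
    + 2 * γ * ∑ j, ip (Dop (e i0) (Dop (e j) a)) (Dop (e i0) (Dop (e j) b)))

lemma key (γ : ℝ) (e : Fin d → Fin d → ZMod N) (i0 : Fin d) (a b : V d N) :
    2 * γ * ip (Lop (e i0) a) (Bop γ e b) = Q γ e i0 a b := by
  rw [ip_L_B]; rfl

lemma Q_nonneg {γ : ℝ} (hγ : 0 ≤ γ) (e : Fin d → Fin d → ZMod N) (i0 : Fin d) (a : V d N) :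
    0 ≤ Q γ e i0 a a := by
  unfold Q
  have hN : (0:ℝ) ≤ (N : ℝ)⁻¹ := by positivity
  refine mul_nonneg (by linarith) (add_nonneg (mul_nonneg hN (ip_self_nonneg _))
    (mul_nonneg (by linarith) ?_))
  exact Finset.sum_nonneg fun j _ => ip_self_nonneg _

lemma Q_le {γ : ℝ} (hγ : 0 ≤ γ) (e : Fin d → Fin d → ZMod N) (i0 : Fin d) (u : V d N) :
    Q γ e i0 u u ≤ ip (Bop γ e u) (Bop γ e u) := by
  have expand : ip (Bop γ e u) (Bop γ e u)
      = (N : ℝ)⁻¹ * ip (Bop γ e u) u + 2 * γ * ∑ j, ip (Bop γ e u) (Lop (e j) u) :=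
    ip_B γ e _ u
  have comm1 : ip (Bop γ e u) u = ip u (Bop γ e u) := ip_comm _ _
  have comm2 : ∀ j, ip (Bop γ e u) (Lop (e j) u) = ip (Lop (e j) u) (Bop γ e u) :=
    fun j => ip_comm _ _
  rw [expand, comm1]
  simp_rw [comm2]
  rw [← Finset.add_sum_erase _ _ (Finset.mem_univ i0)]
  have h1 : 0 ≤ (N : ℝ)⁻¹ * ip u (Bop γ e u) :=
    mul_nonneg (by positivity) (self_B_nonneg hγ e u)
  have h2 : 0 ≤ ∑ j ∈ Finset.univ.erase i0, ip (Lop (e j) u) (Bop γ e u) :=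
    Finset.sum_nonneg fun j _ => L_B_nonneg hγ e (e j) u
  have h3 := key γ e i0 u u
  nlinarith [h3]

/-- weighted Cauchy-Schwarz -/
lemma cs_weighted {ι : Type*} [Fintype ι] (w f g : ι → ℝ) (hw : ∀ i, 0 ≤ w i) :
    (∑ i, w i * (f i * g i)) ^ 2
      ≤ (∑ i, w i * (f i * f i)) * ∑ i, w i * (g i * g i) := by
  refine Finset.sum_sq_le_sum_mul_sum_of_sq_eq_mul Finset.univ
    (fun i _ => mul_nonneg (hw i) (mul_self_nonneg _))
    (fun i _ => mul_nonneg (hw i) (mul_self_nonneg _)) (fun i _ => by ring)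

lemma Q_expand (γ : ℝ) (e : Fin d → Fin d → ZMod N) (i0 : Fin d) (a b : V d N) :
    Q γ e i0 a b
      = ∑ i : Option (Fin d) × (Fin d → ZMod N),
          (match i.1 with
            | none => 2 * γ * (N : ℝ)⁻¹
            | some _ => 4 * γ ^ 2) *
          ((match i.1 with
            | none => Dop (e i0) a i.2
            | some j => Dop (e i0) (Dop (e j) a) i.2) *
           (match i.1 with
            | none => Dop (e i0) b i.2
            | some j => Dop (e i0) (Dop (e j) b) i.2)) := by
  rw [Fintype.sum_prod_type, Fintype.sum_option]
  unfold Q ip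
  rw [Finset.mul_sum]
  simp only []
  rw [mul_add]
  congr 1
  · rw [Finset.mul_sum]; exact Finset.sum_congr rfl fun x _ => by ring
  · rw [Finset.mul_sum, Finset.mul_sum]
    refine Finset.sum_congr rfl fun j _ => ?_
    rw [Finset.mul_sum, Finset.mul_sum]
    exact Finset.sum_congr rfl fun x _ => by ring

lemma Q_cs {γ : ℝ} (hγ : 0 ≤ γ) (e : Fin d → Fin d → ZMod N) (i0 : Fin d) (a b : V d N) :
    (Q γ e i0 a b) ^ 2 ≤ Q γ e i0 a a * Q γ e i0 b b := by
  rw [Q_expand γ e i0 a b, Q_expand γ e i0 a a, Q_expand γ e i0 b b]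
  refine cs_weighted _ _ _ fun i => ?_
  rcases i.1 with _ | j <;> simp <;> positivity

def Blin (γ : ℝ) (e : Fin d → Fin d → ZMod N) : V d N →ₗ[ℝ] V d N where
  toFun := Bop γ e
  map_add' u v := by
    funext x
    simp only [Bop, Lop, Pi.add_apply]
    rw [show (∑ j, (2 * (u x + v x) - (u (x + e j) + v (x + e j))
          - (u (x - e j) + v (x - e j))))
        = (∑ j, (2 * u x - u (x + e j) - u (x - e j)))
          + ∑ j, (2 * v x - v (x + e j) - v (x - e j)) from by
      rw [← Finset.sum_add_distrib]; exact Finset.sum_congr rfl fun j _ => by ring]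
    ring
  map_smul' c u := by
    funext x
    simp only [Bop, Lop, Pi.smul_apply, smul_eq_mul, RingHom.id_apply]
    rw [show (∑ j, (2 * (c * u x) - c * u (x + e j) - c * u (x - e j)))
        = c * ∑ j, (2 * u x - u (x + e j) - u (x - e j)) from by
      rw [Finset.mul_sum]; exact Finset.sum_congr rfl fun j _ => by ring]
    ring

lemma B_surjective {γ : ℝ} (hγ : 0 ≤ γ) (e : Fin d → Fin d → ZMod N) :
    Function.Surjective (Bop γ e) := by
  have hinj : Function.Injective (Blin (N := N) γ e) := by
    rw [← LinearMap.ker_eq_bot, LinearMap.ker_eq_bot']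
    intro u hu
    have hB : Bop γ e u = 0 := hu
    have h0 : ip u (Bop γ e u) = 0 := by
      rw [hB]; unfold ip; simp
    have hexp := ip_B γ e u u
    have hsum : 0 ≤ ∑ j, ip u (Lop (e j) u) := by
      refine Finset.sum_nonneg fun j _ => ?_
      rw [ip_comm, ip_L]; exact ip_self_nonneg _
    have hNpos : (0:ℝ) < (N : ℝ)⁻¹ := by
      have := Nat.pos_of_ne_zero (NeZero.ne N)
      positivity
    have huu : ip u u ≤ 0 := by nlinarith [h0, hexp, ip_self_nonneg u]
    have huu0 : ip u u = 0 := le_antisymm huu (ip_self_nonneg u)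
    funext x
    have := (Finset.sum_eq_zero_iff_of_nonneg fun y _ => mul_self_nonneg (u y)).mp huu0
      x (Finset.mem_univ x)
    exact mul_self_eq_zero.mp this
  exact LinearMap.injective_iff_surjective.mp hinj

end
end Stmt12Aux

open MeasureTheory

/-- Let `G_N : ℤ_N^d → ℝ` (`d ≥ 2`) solve
`N⁻¹G_N(z) − 2γ(ΔG_N)(z) = −(1/2)[δ_0(z) + δ_{e₁}(z)]` on the discrete torus. Then the
discrete second difference of `G_N` in the first direction is bounded by `1/(2γ)`,
uniformly in `N` and `x`. -/
theorem stmt_12 (d : ℕ) (hd : 2 ≤ d) (γ : ℝ) (hγ : 0 < γ) :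
    ∀ (N : ℕ), 0 < N →
    ∀ (e : Fin d → (Fin d → ZMod N)), (∀ j j', e j j' = if j' = j then 1 else 0) →
    ∀ (G : (Fin d → ZMod N) → ℝ),
      (∀ z : Fin d → ZMod N,
        (N : ℝ)⁻¹ * G z
          - 2 * γ * ∑ j : Fin d, (G (z + e j) + G (z - e j) - 2 * G z)
        = -(1/2) * ((if z = 0 then 1 else 0) + (if z = e ⟨0, by omega⟩ then 1 else 0))) →
    ∀ x : Fin d → ZMod N,
      |G (x + e ⟨0, by omega⟩) + G (x - e ⟨0, by omega⟩) - 2 * G x| ≤ 1 / (2 * γ) := by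
  intro N hN e he G hG x
  haveI : NeZero N := ⟨hN.ne'⟩
  open Stmt12Aux in
  set i0 : Fin d := ⟨0, by omega⟩ with hi0
  have hγ' : (0:ℝ) ≤ γ := le_of_lt hγ
  -- the right-hand side
  set g : Stmt12Aux.V d N := fun z =>
    -(1/2) * ((if z = 0 then (1:ℝ) else 0) + (if z = e i0 then 1 else 0)) with hg
  -- B G = g
  have hBG : Stmt12Aux.Bop γ e G = g := by
    funext z
    have hz := hG z
    simp only [Stmt12Aux.Bop, Stmt12Aux.Lop]
    have hs : (∑ j, (2 * G z - G (z + e j) - G (z - e j)))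
        = -∑ j, (G (z + e j) + G (z - e j) - 2 * G z) := by
      rw [← Finset.sum_neg_distrib]
      exact Finset.sum_congr rfl fun j _ => by ring
    rw [hs]
    have : g z = -(1/2) * ((if z = 0 then (1:ℝ) else 0) + (if z = e i0 then 1 else 0)) := rfl
    rw [this]
    linarith [hz]
  -- delta function at x
  set δ : Stmt12Aux.V d N := fun y => if y = x then (1:ℝ) else 0 with hδdef
  obtain ⟨h, hh⟩ := Stmt12Aux.B_surjective hγ' e δ
  -- the target as an inner product
  have hipδ : ∀ u : Stmt12Aux.V d N, Stmt12Aux.ip u δ = u x := by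
    intro u
    unfold Stmt12Aux.ip
    rw [hδdef]
    simp [mul_ite]
  -- ip δ δ = 1
  have hδδ : Stmt12Aux.ip δ δ = 1 := by
    rw [hipδ δ, hδdef]; simp
  -- ip g g ≤ 1
  have hgg : Stmt12Aux.ip g g ≤ 1 := by
    unfold Stmt12Aux.ip
    have hbound : ∀ z : Fin d → ZMod N, g z * g z
        ≤ (1/2) * ((if z = 0 then (1:ℝ) else 0) + (if z = e i0 then 1 else 0)) := by
      intro z
      simp only [hg]
      split_ifs <;> norm_num
    calc (∑ z, g z * g z)
        ≤ ∑ z, (1/2) * ((if z = 0 then (1:ℝ) else 0) + (if z = e i0 then 1 else 0)) :=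
          Finset.sum_le_sum fun z _ => hbound z
      _ = 1 := by
          simp [Finset.mul_sum, Finset.sum_add_distrib, mul_add]
          norm_num
  -- Cauchy-Schwarz chain
  have hQGG : Stmt12Aux.Q γ e i0 G G ≤ 1 := by
    refine (Stmt12Aux.Q_le hγ' e i0 G).trans ?_
    rw [hBG]; exact hgg
  have hQhh : Stmt12Aux.Q γ e i0 h h ≤ 1 := by
    refine (Stmt12Aux.Q_le hγ' e i0 h).trans ?_
    rw [hh, hδδ]
  have hsq : (Stmt12Aux.Q γ e i0 G h) ^ 2 ≤ 1 := by
    refine (Stmt12Aux.Q_cs hγ' e i0 G h).trans ?_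
    have := Stmt12Aux.Q_nonneg hγ' e i0 h
    nlinarith [Stmt12Aux.Q_nonneg hγ' e i0 G]
  have habs : |Stmt12Aux.Q γ e i0 G h| ≤ 1 := by
    nlinarith [abs_nonneg (Stmt12Aux.Q γ e i0 G h), sq_abs (Stmt12Aux.Q γ e i0 G h)]
  -- identify the target
  have hval : 2 * γ * Stmt12Aux.Lop (e i0) G x = Stmt12Aux.Q γ e i0 G h := by
    rw [← Stmt12Aux.key γ e i0 G h, hh, hipδ]
  have htarget : G (x + e i0) + G (x - e i0) - 2 * G x = -(Stmt12Aux.Lop (e i0) G x) := by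
    unfold Stmt12Aux.Lop; ring
  rw [htarget, abs_neg, le_div_iff₀ (by linarith : (0:ℝ) < 2 * γ)]
  calc |Stmt12Aux.Lop (e i0) G x| * (2 * γ)
      = |2 * γ * Stmt12Aux.Lop (e i0) G x| := by
        rw [abs_mul, abs_of_pos (by linarith : (0:ℝ) < 2 * γ)]; ring
    _ = |Stmt12Aux.Q γ e i0 G h| := by rw [hval]
    _ ≤ 1 := habs
end

section
/- For γ > 0 and constants a > 0, b > 0, ν ≥ 0, the integral I(t) = ∫_{[0,1]^d} (k¹)² e^{−aγt|k|²}/(ν + |k|²) dk satisfies: I(t) = t^{−d/2−1} ∫_{[0,√t]^d} (k¹)² e^{−aγ|k|²}/(ν + t^{−1}|k|²) dk; consequently I(t) ≍ t^{−d/2−1} if ν > 0 and I(t) ≍ t^{−d/2} if ν = 0, as t → ∞. -/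
open MeasureTheory Real Pointwise

lemma aux_int_pow {d : ℕ} (i0 : Fin d) {c : ℝ} (hc : 0 < c) :
    Integrable (fun k : Fin d → ℝ => (k i0)^2 * Real.exp (-c * ∑ j, (k j)^2)) := by
  have h2 : Integrable (fun x : ℝ => x ^ 2 * Real.exp (-(c * x ^ 2))) := by
    have := integrable_rpow_mul_exp_neg_mul_sq hc (s := 2) (by norm_num)
    simpa [Real.rpow_two, neg_mul] using this
  have h1 : Integrable (fun x : ℝ => Real.exp (-(c * x ^ 2))) := by
    simpa [neg_mul] using integrable_exp_neg_mul_sq hc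
  set F : Fin d → ℝ → ℝ := fun j x => (if j = i0 then x^2 else 1) * Real.exp (-c * x^2) with hF
  have key : (fun k : Fin d → ℝ => (k i0)^2 * Real.exp (-c * ∑ j, (k j)^2))
      = fun k => ∏ j, F j (k j) := by
    ext k
    rw [hF]
    simp only []
    rw [Finset.prod_mul_distrib]
    congr 1
    · rw [Finset.prod_ite_eq' Finset.univ i0 (fun j => (k j)^2)]
      simp
    · rw [← Real.exp_sum]
      congr 1
      rw [Finset.mul_sum]
  rw [key]
  refine MeasureTheory.Integrable.fintype_prod (𝕜 := ℝ) (f := F) fun j => ?_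
  by_cases h : j = i0 <;> simp [hF, h, h1, h2]

lemma aux_int_exp {d : ℕ} {c : ℝ} (hc : 0 < c) :
    Integrable (fun k : Fin d → ℝ => Real.exp (-c * ∑ j, (k j)^2)) := by
  have h1 : Integrable (fun x : ℝ => Real.exp (-c * x ^ 2)) := integrable_exp_neg_mul_sq hc
  set F : Fin d → ℝ → ℝ := fun _ x => Real.exp (-c * x^2) with hF
  have key : (fun k : Fin d → ℝ => Real.exp (-c * ∑ j, (k j)^2))
      = fun k => ∏ j, F j (k j) := by
    ext k
    rw [← Real.exp_sum]
    congr 1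
    rw [Finset.mul_sum]
  rw [key]
  exact MeasureTheory.Integrable.fintype_prod (𝕜 := ℝ) (f := F) fun j => h1

lemma box_bounds {α : Type*} [MeasureSpace α] (f g : α → ℝ) (s B : Set α)
    (hfm : AEStronglyMeasurable f (volume : Measure α)) (hf0 : ∀ x, 0 ≤ f x)
    (hfg : ∀ x, f x ≤ g x) (hg : Integrable g) (hBmeas : MeasurableSet B) (hBs : B ⊆ s)
    (hBfin : volume B ≠ ⊤) (c₀ : ℝ) (hc₀ : ∀ x ∈ B, c₀ ≤ f x) :
    c₀ * (volume B).toReal ≤ ∫ x in s, f x ∧ ∫ x in s, f x ≤ ∫ x, g x := by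
  have hfi : Integrable f := hg.mono' hfm (Filter.Eventually.of_forall fun x => by
    rw [Real.norm_eq_abs, abs_of_nonneg (hf0 x)]; exact hfg x)
  constructor
  · calc c₀ * (volume B).toReal ≤ ∫ x in B, f x :=
        setIntegral_ge_of_const_le_real hBmeas hBfin hc₀ hfi.integrableOn
      _ ≤ ∫ x in s, f x := setIntegral_mono_set hfi.integrableOn
          (Filter.Eventually.of_forall hf0) (HasSubset.Subset.eventuallyLE hBs)
  · calc ∫ x in s, f x ≤ ∫ x, f x := setIntegral_le_integral hfi (Filter.Eventually.of_forall hf0)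
      _ ≤ ∫ x, g x := integral_mono hfi hg hfg


set_option maxHeartbeats 1000000 in
/-- For `γ, a, b? > 0`, `ν ≥ 0`, `I(t) = ∫_{[0,1]^d} (k¹)² e^{−aγt|k|²}/(ν+|k|²) dk`
satisfies the scaling identity
`I(t) = t^{−d/2−1} ∫_{[0,√t]^d} (k¹)² e^{−aγ|k|²}/(ν + |k|²/t) dk`; consequently
`I(t) ≍ t^{−d/2−1}` if `ν > 0` and `I(t) ≍ t^{−d/2}` if `ν = 0`, as `t → ∞`. -/
theorem stmt_14 (d : ℕ) (hd : 1 ≤ d) (a γ ν : ℝ) (ha : 0 < a) (hγ : 0 < γ)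
    (hν : 0 ≤ ν) (I : ℝ → ℝ)
    (hI : ∀ t : ℝ, I t =
      ∫ k in Set.univ.pi (fun _ : Fin d => Set.Icc (0:ℝ) 1),
        (k ⟨0, hd⟩)^2 * Real.exp (-a * γ * t * ∑ j : Fin d, (k j)^2) /
          (ν + ∑ j : Fin d, (k j)^2)) :
    (∀ t : ℝ, 0 < t → I t =
      t ^ (-(d : ℝ)/2 - 1) *
        ∫ k in Set.univ.pi (fun _ : Fin d => Set.Icc (0:ℝ) (Real.sqrt t)),
          (k ⟨0, hd⟩)^2 * Real.exp (-a * γ * ∑ j : Fin d, (k j)^2) /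
            (ν + t⁻¹ * ∑ j : Fin d, (k j)^2)) ∧
    (0 < ν → ∃ c₁ c₂ t₀ : ℝ, 0 < c₁ ∧ c₁ ≤ c₂ ∧ 1 ≤ t₀ ∧ ∀ t : ℝ, t₀ ≤ t →
      c₁ * t ^ (-(d : ℝ)/2 - 1) ≤ I t ∧ I t ≤ c₂ * t ^ (-(d : ℝ)/2 - 1)) ∧
    (ν = 0 → ∃ c₁ c₂ t₀ : ℝ, 0 < c₁ ∧ c₁ ≤ c₂ ∧ 1 ≤ t₀ ∧ ∀ t : ℝ, t₀ ≤ t →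
      c₁ * t ^ (-(d : ℝ)/2) ≤ I t ∧ I t ≤ c₂ * t ^ (-(d : ℝ)/2)) := by
  have key : ∀ t : ℝ, 0 < t → I t =
      t ^ (-(d : ℝ)/2 - 1) *
        ∫ k in Set.univ.pi (fun _ : Fin d => Set.Icc (0:ℝ) (Real.sqrt t)),
          (k ⟨0, hd⟩)^2 * Real.exp (-a * γ * ∑ j : Fin d, (k j)^2) /
            (ν + t⁻¹ * ∑ j : Fin d, (k j)^2) := by
    intro t ht
    have hst : 0 < Real.sqrt t := Real.sqrt_pos.2 ht
    set f : (Fin d → ℝ) → ℝ := fun k =>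
      (k ⟨0, hd⟩)^2 * Real.exp (-a * γ * ∑ j : Fin d, (k j)^2) /
        (ν + t⁻¹ * ∑ j : Fin d, (k j)^2) with hf
    have hset : Real.sqrt t • Set.univ.pi (fun _ : Fin d => Set.Icc (0:ℝ) 1)
        = Set.univ.pi (fun _ : Fin d => Set.Icc (0:ℝ) (Real.sqrt t)) := by
      ext x
      constructor
      · rintro ⟨y, hy, rfl⟩
        intro j _
        have h1 := hy j (Set.mem_univ j)
        simp only [Set.mem_Icc] at h1 ⊢
        simp only [Pi.smul_apply, smul_eq_mul]
        refine ⟨mul_nonneg hst.le h1.1, ?_⟩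
        calc Real.sqrt t * y j ≤ Real.sqrt t * 1 := by
              exact mul_le_mul_of_nonneg_left h1.2 hst.le
          _ = Real.sqrt t := mul_one _
      · intro hx
        refine ⟨(Real.sqrt t)⁻¹ • x, fun j _ => ?_, ?_⟩
        · have h1 := hx j (Set.mem_univ j)
          simp only [Set.mem_Icc] at h1 ⊢
          simp only [Pi.smul_apply, smul_eq_mul]
          refine ⟨mul_nonneg (inv_nonneg.2 hst.le) h1.1, ?_⟩
          calc (Real.sqrt t)⁻¹ * x j ≤ (Real.sqrt t)⁻¹ * Real.sqrt t := by
                exact mul_le_mul_of_nonneg_left h1.2 (inv_nonneg.2 hst.le)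
            _ = 1 := inv_mul_cancel₀ hst.ne'
        · show Real.sqrt t • ((Real.sqrt t)⁻¹ • x) = x
          rw [smul_smul, mul_inv_cancel₀ hst.ne', one_smul]
    have hcomp := MeasureTheory.Measure.setIntegral_comp_smul_of_pos
      (volume : Measure (Fin d → ℝ)) f (Set.univ.pi (fun _ : Fin d => Set.Icc (0:ℝ) 1)) hst
    rw [hset, Module.finrank_fin_fun] at hcomp
    have hft : ∀ x : Fin d → ℝ, f (Real.sqrt t • x) =
        t * ((x ⟨0, hd⟩)^2 * Real.exp (-a * γ * t * ∑ j : Fin d, (x j)^2) /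
          (ν + ∑ j : Fin d, (x j)^2)) := by
      intro x
      have hsq : Real.sqrt t ^ 2 = t := Real.sq_sqrt ht.le
      simp only [hf, Pi.smul_apply, smul_eq_mul, mul_pow, hsq, ← Finset.mul_sum]
      rw [inv_mul_cancel_left₀ ht.ne']
      ring_nf
    have hI1 : ∫ x in Set.univ.pi (fun _ : Fin d => Set.Icc (0:ℝ) 1),
        f (Real.sqrt t • x) = t * I t := by
      simp_rw [hft]
      rw [MeasureTheory.integral_const_mul t, hI t]
    have hne : ((Real.sqrt t) ^ d : ℝ) ≠ 0 := pow_ne_zero _ hst.ne'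
    have hint : ∫ x in Set.univ.pi (fun _ : Fin d => Set.Icc (0:ℝ) (Real.sqrt t)), f x
        = (Real.sqrt t)^d * (t * I t) := by
      rw [← hI1, hcomp, smul_eq_mul, ← mul_assoc, mul_inv_cancel₀ hne, one_mul]
    rw [hint]
    have hpow : t ^ (-(d : ℝ)/2 - 1) * ((Real.sqrt t)^d * t) = 1 := by
      rw [Real.sqrt_eq_rpow]
      calc t ^ (-(d : ℝ)/2 - 1) * ((t ^ ((1:ℝ)/2)) ^ d * t)
          = t ^ (-(d : ℝ)/2 - 1) * (t ^ ((1:ℝ)/2 * d) * t ^ (1:ℝ)) := by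
            rw [← Real.rpow_natCast (t ^ ((1:ℝ)/2)) d, ← Real.rpow_mul ht.le, Real.rpow_one]
        _ = t ^ ((-(d : ℝ)/2 - 1) + ((1:ℝ)/2 * d + 1)) := by
            rw [Real.rpow_add ht, Real.rpow_add ht, Real.rpow_one]
        _ = 1 := by
            rw [show (-(d : ℝ)/2 - 1) + ((1:ℝ)/2 * d + 1) = 0 by ring, Real.rpow_zero]
    calc I t = (t ^ (-(d : ℝ)/2 - 1) * ((Real.sqrt t)^d * t)) * I t := by rw [hpow, one_mul]
      _ = t ^ (-(d : ℝ)/2 - 1) * ((Real.sqrt t)^d * (t * I t)) := by ring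
  refine ⟨key, ?_, ?_⟩
  · -- case ν > 0
    intro hν'
    have hc : (0:ℝ) < a * γ := mul_pos ha hγ
    set G : (Fin d → ℝ) → ℝ := fun k => (k ⟨0,hd⟩)^2 *
      Real.exp (-a * γ * ∑ j : Fin d, (k j)^2) with hG
    have hGint : Integrable G := by
      have := aux_int_pow (⟨0,hd⟩ : Fin d) hc
      simpa [hG, neg_mul, mul_assoc] using this
    have hd1 : (1:ℝ) ≤ (d:ℝ) := by exact_mod_cast hd
    set c₀ : ℝ := 4⁻¹ * Real.exp (-a * γ * d) / (ν + d) with hc₀def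
    set c₁ : ℝ := c₀ * (2⁻¹:ℝ)^d with hc₁def
    set c₂ : ℝ := ν⁻¹ * ∫ k, G k with hc₂def
    have hc₀pos : 0 < c₀ := div_pos (by positivity) (by linarith)
    have hc₁pos : 0 < c₁ := by positivity
    have hsum0 : ∀ x : Fin d → ℝ, (0:ℝ) ≤ ∑ j : Fin d, (x j)^2 :=
      fun x => Finset.sum_nonneg fun j _ => sq_nonneg _
    have hmain : ∀ t : ℝ, 1 ≤ t →
        c₁ * t ^ (-(d : ℝ)/2 - 1) ≤ I t ∧ I t ≤ c₂ * t ^ (-(d : ℝ)/2 - 1) := by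
      intro t ht1
      have ht0 : 0 < t := lt_of_lt_of_le one_pos ht1
      have hst1 : (1:ℝ) ≤ Real.sqrt t := by
        rw [show (1:ℝ) = Real.sqrt 1 by rw [Real.sqrt_one]]
        exact Real.sqrt_le_sqrt ht1
      set f : (Fin d → ℝ) → ℝ := fun k => (k ⟨0,hd⟩)^2 *
        Real.exp (-a * γ * ∑ j : Fin d, (k j)^2) /
          (ν + t⁻¹ * ∑ j : Fin d, (k j)^2) with hfdef
      have hf0 : ∀ x, 0 ≤ f x := fun x => div_nonneg
        (mul_nonneg (sq_nonneg _) (Real.exp_pos _).le)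
        (add_nonneg hν (mul_nonneg (inv_nonneg.2 ht0.le) (hsum0 x)))
      have hfg : ∀ x, f x ≤ ν⁻¹ * G x := by
        intro x
        have h1 : f x ≤ ((x ⟨0,hd⟩)^2 * Real.exp (-a * γ * ∑ j : Fin d, (x j)^2)) / ν :=
          div_le_div₀ (mul_nonneg (sq_nonneg _) (Real.exp_pos _).le) le_rfl hν'
            (le_add_of_nonneg_right (mul_nonneg (inv_nonneg.2 ht0.le) (hsum0 x)))
        calc f x ≤ _ := h1
          _ = ν⁻¹ * G x := by rw [hG, div_eq_inv_mul]
      have hfm : AEStronglyMeasurable f volume := by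
        apply Measurable.aestronglyMeasurable
        fun_prop
      have hBmeas : MeasurableSet (Set.univ.pi fun _ : Fin d => Set.Icc (2⁻¹:ℝ) 1) :=
        MeasurableSet.univ_pi fun _ => measurableSet_Icc
      have hBfin : volume (Set.univ.pi fun _ : Fin d => Set.Icc (2⁻¹:ℝ) 1) ≠ ⊤ :=
        ((isCompact_univ_pi fun _ => isCompact_Icc).measure_lt_top).ne
      have hBsub : (Set.univ.pi fun _ : Fin d => Set.Icc (2⁻¹:ℝ) 1) ⊆
          Set.univ.pi fun _ : Fin d => Set.Icc (0:ℝ) (Real.sqrt t) := by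
        intro x hx j _
        have h1 := hx j (Set.mem_univ j)
        simp only [Set.mem_Icc] at h1 ⊢
        exact ⟨le_trans (by norm_num) h1.1, h1.2.trans hst1⟩
      have hBc : ∀ x ∈ (Set.univ.pi fun _ : Fin d => Set.Icc (2⁻¹:ℝ) 1), c₀ ≤ f x := by
        intro x hx
        have hxsum : (∑ j : Fin d, (x j)^2) ≤ d := by
          calc ∑ j : Fin d, (x j)^2 ≤ ∑ _j : Fin d, (1:ℝ) :=
              Finset.sum_le_sum fun j _ => by
                have h1 := hx j (Set.mem_univ j)
                simp only [Set.mem_Icc] at h1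
                nlinarith
            _ = d := by simp
        have hx0 : (4⁻¹:ℝ) ≤ (x ⟨0,hd⟩)^2 := by
          have h1 := hx ⟨0,hd⟩ (Set.mem_univ _)
          simp only [Set.mem_Icc] at h1
          nlinarith
        have hinv : t⁻¹ ≤ 1 := by
          rw [show (1:ℝ) = 1⁻¹ by norm_num]
          exact inv_anti₀ one_pos ht1
        have hden : ν + t⁻¹ * ∑ j : Fin d, (x j)^2 ≤ ν + d := by
          have h2 : t⁻¹ * ∑ j : Fin d, (x j)^2 ≤ 1 * ∑ j : Fin d, (x j)^2 :=
            mul_le_mul_of_nonneg_right hinv (hsum0 x)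
          linarith [hsum0 x]
        have hdenpos : 0 < ν + t⁻¹ * ∑ j : Fin d, (x j)^2 :=
          add_pos_of_pos_of_nonneg hν' (mul_nonneg (inv_nonneg.2 ht0.le) (hsum0 x))
        have hexp : Real.exp (-a * γ * (d:ℝ)) ≤ Real.exp (-a * γ * ∑ j : Fin d, (x j)^2) := by
          apply Real.exp_le_exp.2
          nlinarith
        have hnum : 4⁻¹ * Real.exp (-a * γ * (d:ℝ)) ≤
            (x ⟨0,hd⟩)^2 * Real.exp (-a * γ * ∑ j : Fin d, (x j)^2) :=
          mul_le_mul hx0 hexp (Real.exp_pos _).le (sq_nonneg _)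
        exact div_le_div₀ (mul_nonneg (sq_nonneg _) (Real.exp_pos _).le) hnum hdenpos hden
      have hBvol : (volume (Set.univ.pi fun _ : Fin d => Set.Icc (2⁻¹:ℝ) 1)).toReal
          = (2⁻¹:ℝ)^d := by
        rw [volume_pi_pi]
        simp only [Real.volume_Icc]
        rw [Finset.prod_const, Finset.card_univ, Fintype.card_fin]
        rw [show (1:ℝ) - 2⁻¹ = 2⁻¹ by norm_num]
        rw [← ENNReal.ofReal_pow (by norm_num), ENNReal.toReal_ofReal (by positivity)]
      obtain ⟨hlow, hup⟩ := box_bounds f (fun k => ν⁻¹ * G k)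
        (Set.univ.pi fun _ : Fin d => Set.Icc (0:ℝ) (Real.sqrt t))
        (Set.univ.pi fun _ : Fin d => Set.Icc (2⁻¹:ℝ) 1)
        hfm hf0 hfg (hGint.const_mul _) hBmeas hBsub hBfin c₀ hBc
      have hIt : I t = t ^ (-(d : ℝ)/2 - 1) *
          ∫ x in Set.univ.pi fun _ : Fin d => Set.Icc (0:ℝ) (Real.sqrt t), f x := key t ht0
      rw [hIt]
      have hrp : (0:ℝ) ≤ t ^ (-(d : ℝ)/2 - 1) := (Real.rpow_pos_of_pos ht0 _).le
      constructor
      · have h3 := mul_le_mul_of_nonneg_left hlow hrp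
        rw [hBvol] at h3
        calc c₁ * t ^ (-(d : ℝ)/2 - 1)
            = t ^ (-(d : ℝ)/2 - 1) * (c₀ * (2⁻¹:ℝ)^d) := by rw [hc₁def]; ring
          _ ≤ _ := h3
      · have h3 := mul_le_mul_of_nonneg_left hup hrp
        calc t ^ (-(d : ℝ)/2 - 1) *
              ∫ x in Set.univ.pi fun _ : Fin d => Set.Icc (0:ℝ) (Real.sqrt t), f x
            ≤ t ^ (-(d : ℝ)/2 - 1) * ∫ k, ν⁻¹ * G k := h3
          _ = c₂ * t ^ (-(d : ℝ)/2 - 1) := by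
              rw [MeasureTheory.integral_const_mul, hc₂def]; ring
    have h1 := hmain 1 le_rfl
    rw [Real.one_rpow, mul_one, mul_one] at h1
    exact ⟨c₁, c₂, 1, hc₁pos, le_trans h1.1 h1.2, le_rfl, hmain⟩
  · -- case ν = 0
    intro hν0
    subst hν0
    have hc : (0:ℝ) < a * γ := mul_pos ha hγ
    set G : (Fin d → ℝ) → ℝ := fun k => Real.exp (-a * γ * ∑ j : Fin d, (k j)^2) with hG
    have hGint : Integrable G := by
      have := aux_int_exp (d := d) hc
      simpa [hG, neg_mul, mul_assoc] using this
    have hd1 : (1:ℝ) ≤ (d:ℝ) := by exact_mod_cast hd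
    set c₀ : ℝ := 4⁻¹ * Real.exp (-a * γ * d) / d with hc₀def
    set c₁ : ℝ := c₀ * (2⁻¹:ℝ)^d with hc₁def
    set c₂ : ℝ := ∫ k, G k with hc₂def
    have hc₀pos : 0 < c₀ := div_pos (by positivity) (by linarith)
    have hc₁pos : 0 < c₁ := by positivity
    have hsum0 : ∀ x : Fin d → ℝ, (0:ℝ) ≤ ∑ j : Fin d, (x j)^2 :=
      fun x => Finset.sum_nonneg fun j _ => sq_nonneg _
    set f : (Fin d → ℝ) → ℝ := fun k => (k ⟨0,hd⟩)^2 *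
      Real.exp (-a * γ * ∑ j : Fin d, (k j)^2) / (∑ j : Fin d, (k j)^2) with hfdef
    have hf0 : ∀ x, 0 ≤ f x := fun x => div_nonneg
      (mul_nonneg (sq_nonneg _) (Real.exp_pos _).le) (hsum0 x)
    have hfg : ∀ x, f x ≤ G x := by
      intro x
      rcases eq_or_lt_of_le (hsum0 x) with h0 | h0
      · show (x ⟨0,hd⟩)^2 * Real.exp (-a * γ * ∑ j : Fin d, (x j)^2) /
            (∑ j : Fin d, (x j)^2) ≤ G x
        rw [← h0, div_zero]
        exact (Real.exp_pos _).le
      · show (x ⟨0,hd⟩)^2 * Real.exp (-a * γ * ∑ j : Fin d, (x j)^2) /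
            (∑ j : Fin d, (x j)^2) ≤ G x
        rw [div_le_iff₀ h0]
        have hx0 : (x ⟨0,hd⟩)^2 ≤ ∑ j : Fin d, (x j)^2 :=
          Finset.single_le_sum (fun j _ => sq_nonneg (x j)) (Finset.mem_univ _)
        calc (x ⟨0,hd⟩)^2 * Real.exp (-a * γ * ∑ j : Fin d, (x j)^2)
            ≤ (∑ j : Fin d, (x j)^2) * Real.exp (-a * γ * ∑ j : Fin d, (x j)^2) :=
              mul_le_mul_of_nonneg_right hx0 (Real.exp_pos _).le
          _ = G x * ∑ j : Fin d, (x j)^2 := by rw [hG]; ring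
    have hfm : AEStronglyMeasurable f volume := by
      apply Measurable.aestronglyMeasurable
      fun_prop
    have hBmeas : MeasurableSet (Set.univ.pi fun _ : Fin d => Set.Icc (2⁻¹:ℝ) 1) :=
      MeasurableSet.univ_pi fun _ => measurableSet_Icc
    have hBfin : volume (Set.univ.pi fun _ : Fin d => Set.Icc (2⁻¹:ℝ) 1) ≠ ⊤ :=
      ((isCompact_univ_pi fun _ => isCompact_Icc).measure_lt_top).ne
    have hBvol : (volume (Set.univ.pi fun _ : Fin d => Set.Icc (2⁻¹:ℝ) 1)).toReal
        = (2⁻¹:ℝ)^d := by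
      rw [volume_pi_pi]
      simp only [Real.volume_Icc]
      rw [Finset.prod_const, Finset.card_univ, Fintype.card_fin]
      rw [show (1:ℝ) - 2⁻¹ = 2⁻¹ by norm_num]
      rw [← ENNReal.ofReal_pow (by norm_num), ENNReal.toReal_ofReal (by positivity)]
    have hBc : ∀ x ∈ (Set.univ.pi fun _ : Fin d => Set.Icc (2⁻¹:ℝ) 1), c₀ ≤ f x := by
      intro x hx
      have hxsum : (∑ j : Fin d, (x j)^2) ≤ d := by
        calc ∑ j : Fin d, (x j)^2 ≤ ∑ _j : Fin d, (1:ℝ) :=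
            Finset.sum_le_sum fun j _ => by
              have h1 := hx j (Set.mem_univ j)
              simp only [Set.mem_Icc] at h1
              nlinarith
          _ = d := by simp
      have hx0 : (4⁻¹:ℝ) ≤ (x ⟨0,hd⟩)^2 := by
        have h1 := hx ⟨0,hd⟩ (Set.mem_univ _)
        simp only [Set.mem_Icc] at h1
        nlinarith
      have hx0s : (x ⟨0,hd⟩)^2 ≤ ∑ j : Fin d, (x j)^2 :=
        Finset.single_le_sum (fun j _ => sq_nonneg (x j)) (Finset.mem_univ _)
      have hdenpos : 0 < ∑ j : Fin d, (x j)^2 := by nlinarith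
      have hexp : Real.exp (-a * γ * (d:ℝ)) ≤ Real.exp (-a * γ * ∑ j : Fin d, (x j)^2) := by
        apply Real.exp_le_exp.2
        nlinarith
      have hnum : 4⁻¹ * Real.exp (-a * γ * (d:ℝ)) ≤
          (x ⟨0,hd⟩)^2 * Real.exp (-a * γ * ∑ j : Fin d, (x j)^2) :=
        mul_le_mul hx0 hexp (Real.exp_pos _).le (sq_nonneg _)
      exact div_le_div₀ (mul_nonneg (sq_nonneg _) (Real.exp_pos _).le) hnum hdenpos hxsum
    have hmain : ∀ t : ℝ, 1 ≤ t →
        c₁ * t ^ (-(d : ℝ)/2) ≤ I t ∧ I t ≤ c₂ * t ^ (-(d : ℝ)/2) := by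
      intro t ht1
      have ht0 : 0 < t := lt_of_lt_of_le one_pos ht1
      have hst1 : (1:ℝ) ≤ Real.sqrt t := by
        rw [show (1:ℝ) = Real.sqrt 1 by rw [Real.sqrt_one]]
        exact Real.sqrt_le_sqrt ht1
      have hBsub : (Set.univ.pi fun _ : Fin d => Set.Icc (2⁻¹:ℝ) 1) ⊆
          Set.univ.pi fun _ : Fin d => Set.Icc (0:ℝ) (Real.sqrt t) := by
        intro x hx j _
        have h1 := hx j (Set.mem_univ j)
        simp only [Set.mem_Icc] at h1 ⊢
        exact ⟨le_trans (by norm_num) h1.1, h1.2.trans hst1⟩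
      have hconv : (∫ k in Set.univ.pi fun _ : Fin d => Set.Icc (0:ℝ) (Real.sqrt t),
            (k ⟨0, hd⟩)^2 * Real.exp (-a * γ * ∑ j : Fin d, (k j)^2) /
              ((0:ℝ) + t⁻¹ * ∑ j : Fin d, (k j)^2))
          = t * ∫ k in Set.univ.pi fun _ : Fin d => Set.Icc (0:ℝ) (Real.sqrt t), f k := by
        rw [← MeasureTheory.integral_const_mul]
        refine setIntegral_congr_fun (MeasurableSet.univ_pi fun _ => measurableSet_Icc)
          fun x _ => ?_
        show (x ⟨0, hd⟩)^2 * Real.exp (-a * γ * ∑ j : Fin d, (x j)^2) /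
            ((0:ℝ) + t⁻¹ * ∑ j : Fin d, (x j)^2)
          = t * ((x ⟨0,hd⟩)^2 * Real.exp (-a * γ * ∑ j : Fin d, (x j)^2) /
              (∑ j : Fin d, (x j)^2))
        rw [zero_add, div_eq_mul_inv, mul_inv, inv_inv, div_eq_mul_inv]
        ring
      have hexpc : t ^ (-(d:ℝ)/2 - 1) * t = t ^ (-(d:ℝ)/2) := by
        rw [Real.rpow_sub ht0, Real.rpow_one, div_mul_cancel₀ _ ht0.ne']
      have hIt : I t = t ^ (-(d : ℝ)/2) *
          ∫ x in Set.univ.pi fun _ : Fin d => Set.Icc (0:ℝ) (Real.sqrt t), f x := by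
        rw [key t ht0, hconv, ← mul_assoc, hexpc]
      obtain ⟨hlow, hup⟩ := box_bounds f G
        (Set.univ.pi fun _ : Fin d => Set.Icc (0:ℝ) (Real.sqrt t))
        (Set.univ.pi fun _ : Fin d => Set.Icc (2⁻¹:ℝ) 1)
        hfm hf0 hfg hGint hBmeas hBsub hBfin c₀ hBc
      rw [hIt]
      have hrp : (0:ℝ) ≤ t ^ (-(d : ℝ)/2) := (Real.rpow_pos_of_pos ht0 _).le
      constructor
      · have h3 := mul_le_mul_of_nonneg_left hlow hrp
        rw [hBvol] at h3
        calc c₁ * t ^ (-(d : ℝ)/2)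
            = t ^ (-(d : ℝ)/2) * (c₀ * (2⁻¹:ℝ)^d) := by rw [hc₁def]; ring
          _ ≤ _ := h3
      · have h3 := mul_le_mul_of_nonneg_left hup hrp
        calc t ^ (-(d : ℝ)/2) *
              ∫ x in Set.univ.pi fun _ : Fin d => Set.Icc (0:ℝ) (Real.sqrt t), f x
            ≤ t ^ (-(d : ℝ)/2) * ∫ k, G k := h3
          _ = c₂ * t ^ (-(d : ℝ)/2) := by rw [hc₂def]; ring
    have h1 := hmain 1 le_rfl
    rw [Real.one_rpow, mul_one, mul_one] at h1
    exact ⟨c₁, c₂, 1, hc₁pos, le_trans h1.1 h1.2, le_rfl, hmain⟩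
end
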